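/- arXiv:1110.1861 — 4 statements merged into one kernel-verified Lean document; each statement's English description precedes it below -/
import Mathlib

section
/- Let S = K[x₁,…,xₙ] be graded by an abelian group A with deg(x_i) = a_i, and suppose the grading is positive (dim_K S_a < ∞ for all a ∈ A). Let φ : A → ℤ be a group homomorphism with φ(a) > 0 whenever S_a ≠ 0 and a ≠ 0. Let h : A → ℕ be a function, let D be a very supportive set for h, and choose N > 0 with φ(a) < N for all a ∈ D. Define h̄ : A → ℕ by h̄(a) = h(a) if φ(a) < N, and h̄(a) = 0 otherwise. Let B ≥ N be such that every degree a of a minimal generator, or of a minimal generator of the syzygy module, of the monomial ideal ⟨x^u : φ(deg(x^u)) ≥ N⟩ satisfies φ(a) ≤ B, and set D' = D ∪ { a ∈ A : a = deg(x^u) for some monomial x^u and N ≤ φ(a) ≤ B }. Then D' is a very supportive set for h̄. -/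
open MvPolynomial

/-- The degree in `A` of the monomial `x^u`, for the grading with `deg(x_i) = wt i`. -/
def mdeg {n : ℕ} {A : Type*} [AddCommGroup A] (wt : Fin n → A) (u : Fin n →₀ ℕ) : A :=
  ∑ i, u i • wt i

/-- A set of exponent vectors corresponding to a monomial ideal, i.e. closed under
multiplication by monomials. -/
def UpSet {n : ℕ} (U : Set (Fin n →₀ ℕ)) : Prop :=
  ∀ u ∈ U, ∀ w : Fin n →₀ ℕ, u + w ∈ U

/-- The Hilbert function of the monomial ideal with monomials `U`: the number of
standard monomials in each degree. -/
noncomputable def HF {n : ℕ} {A : Type*} [AddCommGroup A] (wt : Fin n → A)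
    (U : Set (Fin n →₀ ℕ)) (a : A) : ℕ :=
  Set.ncard {u : Fin n →₀ ℕ | mdeg wt u = a ∧ u ∉ U}

/-- The monomial ideal `U` is generated by monomials whose degrees lie in `D`. -/
def GenInDegs {n : ℕ} {A : Type*} [AddCommGroup A] (wt : Fin n → A)
    (U : Set (Fin n →₀ ℕ)) (D : Set A) : Prop :=
  ∃ G ⊆ U, (∀ g ∈ G, mdeg wt g ∈ D) ∧ ∀ u, u ∈ U ↔ ∃ g ∈ G, g ≤ u

/-- The minimal monomial generators of the monomial ideal `U`. -/
def minGens {n : ℕ} (U : Set (Fin n →₀ ℕ)) : Set (Fin n →₀ ℕ) :=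
  {u ∈ U | ∀ v ∈ U, v ≤ u → v = u}

/-- The map `⊕_{x^u ∈ G} S·e_u → S` sending `e_u` to `x^u`; its kernel is the syzygy
module of the monomial ideal generated by `G`. -/
noncomputable def syzMap (K : Type*) [Field K] {n : ℕ} (G : Set (Fin n →₀ ℕ)) :
    (G →₀ MvPolynomial (Fin n) K) →ₗ[MvPolynomial (Fin n) K] MvPolynomial (Fin n) K :=
  Finsupp.linearCombination _ (fun g => monomial (g : Fin n →₀ ℕ) 1)

/-- The Koszul syzygies `x^{v'}e_u − x^{u'}e_v` (where
`x^u x^{v'} = x^v x^{u'} = lcm(x^u,x^v)`) among generators in `G` whose lcm has degree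
in `D`. -/
noncomputable def koszulSyz (K : Type*) [Field K] {n : ℕ} {A : Type*} [AddCommGroup A]
    (wt : Fin n → A) (G : Set (Fin n →₀ ℕ)) (D : Set A) :
    Set (G →₀ MvPolynomial (Fin n) K) :=
  { s | ∃ u v : G, mdeg wt ((u : Fin n →₀ ℕ) ⊔ (v : Fin n →₀ ℕ)) ∈ D ∧
      s = Finsupp.single u (monomial (((u : Fin n →₀ ℕ) ⊔ (v : Fin n →₀ ℕ)) - (u : Fin n →₀ ℕ)) 1) -
          Finsupp.single v (monomial (((u : Fin n →₀ ℕ) ⊔ (v : Fin n →₀ ℕ)) - (v : Fin n →₀ ℕ)) 1) }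

/-- `D` is a very supportive set for the Hilbert function `h`:
(g) every monomial ideal with Hilbert function `h` is generated in degrees in `D`;
(h) a monomial ideal generated in degrees in `D` whose Hilbert function agrees with `h`
on `D` has Hilbert function `h` everywhere;
(s) for every monomial ideal with Hilbert function `h`, the syzygy module of its
minimal generators is generated by the Koszul syzygies whose lcm-degree lies in `D`. -/
def VerySupportive (K : Type*) [Field K] {n : ℕ} {A : Type*} [AddCommGroup A]
    (wt : Fin n → A) (h : A → ℕ) (D : Set A) : Prop :=
  D.Finite ∧
  (∀ U : Set (Fin n →₀ ℕ), UpSet U → (∀ a, HF wt U a = h a) → GenInDegs wt U D) ∧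
  (∀ U : Set (Fin n →₀ ℕ), UpSet U → GenInDegs wt U D →
    (∀ a ∈ D, HF wt U a = h a) → ∀ a, HF wt U a = h a) ∧
  (∀ U : Set (Fin n →₀ ℕ), UpSet U → (∀ a, HF wt U a = h a) →
    LinearMap.ker (syzMap K (minGens U)) =
      Submodule.span (MvPolynomial (Fin n) K) (koszulSyz K wt (minGens U) D))

/-!
Write `d u = φ (mdeg wt u)`; it is additive and positive on nonconstant monomials. A monomial
ideal with Hilbert function `h̄` contains the high ideal `{d ≥ N}`, and its part generated in
degrees `d < N` has Hilbert function `h`; conversely, an ideal generated in `D'` agreeing with `h̄`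
on `D'` contains the high ideal (whose minimal generators have degrees in `D'`) and its low part is
generated in `D`. So (g) and (h) for `D'` reduce to (g) and (h) for `D`.

For (s), the binomial syzygies `x^{M-g} e_g - x^{M-g'} e_{g'}` generate all syzygies. Pairs of
low generators are handled by (s) for the low part, pairs of high generators by transferring the
Koszul syzygies of the high ideal (of degree `≤ B`) along generators of the ideal lying below
them. A low generator `u` is linked to the high ones through a generator `q` of the high ideal
minimising `d (lcm u q)`: lowering `lcm u q` in one variable `x_j` drops below `N`, so
`d (lcm u q) < N + φ (wt j) ≤ B`, the last bound being forced by the Koszul syzygy of two pure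
powers in the high ideal.
-/

section Degree

variable {n : ℕ} {A : Type*} [AddCommGroup A] (wt : Fin n → A)

lemma mdeg_add (u v : Fin n →₀ ℕ) : mdeg wt (u + v) = mdeg wt u + mdeg wt v := by
  simp [mdeg, add_smul, Finset.sum_add_distrib]

lemma mdeg_zero : mdeg wt (0 : Fin n →₀ ℕ) = 0 := by
  simp [mdeg]

lemma mdeg_single (j : Fin n) (m : ℕ) : mdeg wt (Finsupp.single j m) = m • wt j := by
  rw [mdeg, Finset.sum_eq_single j] <;> simp +contextual [eq_comm]

lemma mdeg_nsmul (k : ℕ) (u : Fin n →₀ ℕ) : mdeg wt (k • u) = k • mdeg wt u := by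
  simp [mdeg, Finset.smul_sum, smul_smul]

lemma eq_zero_of_mdeg_eq_zero (hpos : ∀ a : A, {u : Fin n →₀ ℕ | mdeg wt u = a}.Finite)
    {u : Fin n →₀ ℕ} (hu : mdeg wt u = 0) : u = 0 := by
  by_contra hu0
  -- otherwise the infinitely many multiples `k • u` all have degree `0`
  have hinj : Function.Injective (fun k : ℕ => k • u) :=
    (strictMono_nat_of_lt_succ fun k => by
      simpa [succ_nsmul] using pos_iff_ne_zero.mpr hu0).injective
  exact Set.infinite_range_of_injective hinj
    ((hpos 0).subset (Set.range_subset_iff.mpr fun k => by simp [mdeg_nsmul, hu]))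

variable {wt} {φ : A →+ ℤ}

lemma phi_mdeg_pos (hpos : ∀ a : A, {u : Fin n →₀ ℕ | mdeg wt u = a}.Finite)
    (hφ : ∀ a : A, a ≠ 0 → (∃ u : Fin n →₀ ℕ, mdeg wt u = a) → 0 < φ a)
    {u : Fin n →₀ ℕ} (hu : u ≠ 0) : 0 < φ (mdeg wt u) :=
  hφ _ (mt (eq_zero_of_mdeg_eq_zero wt hpos) hu) ⟨u, rfl⟩

variable (hd : ∀ u : Fin n →₀ ℕ, u ≠ 0 → 0 < φ (mdeg wt u))
include hd

lemma phi_mdeg_mono {u v : Fin n →₀ ℕ} (huv : u ≤ v) : φ (mdeg wt u) ≤ φ (mdeg wt v) := by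
  obtain ⟨w, rfl⟩ := exists_add_of_le huv
  rcases eq_or_ne w 0 with rfl | hw
  · simp
  · rw [mdeg_add, map_add]
    linarith [hd w hw]

lemma one_le_phi_wt (j : Fin n) : 1 ≤ φ (wt j) := by
  have := hd (Finsupp.single j 1) (by simp)
  rw [mdeg_single, one_nsmul] at this
  omega

lemma finite_setOf_phi_mdeg_le (B : ℤ) : {u : Fin n →₀ ℕ | φ (mdeg wt u) ≤ B}.Finite := by
  refine (Set.finite_Iic (Finsupp.equivFunOnFinite.symm fun _ => B.toNat)).subset fun u hu i => ?_
  have hi : (u i : ℤ) * φ (wt i) ≤ B := by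
    calc (u i : ℤ) * φ (wt i) = φ (mdeg wt (Finsupp.single i (u i))) := by simp [mdeg_single]
      _ ≤ φ (mdeg wt u) := phi_mdeg_mono hd (Finsupp.single_le_iff.mpr le_rfl)
      _ ≤ B := hu
  have := one_le_phi_wt hd i
  show u i ≤ B.toNat
  nlinarith [Int.toNat_of_nonneg (show (0:ℤ) ≤ B by nlinarith), (u i).cast_nonneg (α := ℤ)]

end Degree

section MonomialIdeal

variable {n : ℕ} {U V G : Set (Fin n →₀ ℕ)} {u g : Fin n →₀ ℕ}

lemma UpSet.isUpperSet (hU : UpSet U) : IsUpperSet U := fun u v huv hu => by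
  obtain ⟨w, rfl⟩ := exists_add_of_le huv
  exact hU u hu w

lemma upSet_upperClosure (G : Set (Fin n →₀ ℕ)) : UpSet (upperClosure G : Set (Fin n →₀ ℕ)) :=
  fun _ hu _ => (upperClosure G).upper le_self_add hu

lemma mem_minGens_iff : u ∈ minGens U ↔ Minimal (· ∈ U) u := by
  simp only [minimal_iff, minGens, Set.mem_ofPred_eq, eq_comm]

lemma minGens_subset : minGens U ⊆ U := fun _ hu => hu.1

lemma exists_minGens_le (hu : u ∈ U) : ∃ g ∈ minGens U, g ≤ u :=
  let ⟨g, hgu, hg⟩ := exists_minimal_le_of_wellFoundedLT (· ∈ U) u hu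
  ⟨g, mem_minGens_iff.mpr hg, hgu⟩

lemma mem_minGens_of_subset (hVU : V ⊆ U) (hg : g ∈ minGens U) (hgV : g ∈ V) : g ∈ minGens V :=
  ⟨hgV, fun v hv hvg => hg.2 v (hVU hv) hvg⟩

lemma subset_of_minGens_subset (hU : UpSet U) (h : minGens V ⊆ U) : V ⊆ U := fun _ hv =>
  let ⟨_, hg, hgv⟩ := exists_minGens_le hv
  hU.isUpperSet hgv (h hg)

lemma upperClosure_minGens (hU : UpSet U) : (upperClosure (minGens U) : Set _) = U :=
  Set.Subset.antisymm
    (fun _ hu => let ⟨_, hg, hgu⟩ := mem_upperClosure.mp hu; hU.isUpperSet hgu (minGens_subset hg))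
    (fun _ hu => mem_upperClosure.mpr (exists_minGens_le hu))

variable {A : Type*} [AddCommGroup A] {wt : Fin n → A} {D E : Set A}

lemma genInDegs_upperClosure (hG : ∀ g ∈ G, mdeg wt g ∈ D) :
    GenInDegs wt (upperClosure G : Set (Fin n →₀ ℕ)) D :=
  ⟨G, subset_upperClosure, hG, fun _ => mem_upperClosure⟩

lemma genInDegs_of_minGens (hU : UpSet U) (h : ∀ g ∈ minGens U, mdeg wt g ∈ D) :
    GenInDegs wt U D :=
  upperClosure_minGens hU ▸ genInDegs_upperClosure h

lemma GenInDegs.mono (h : GenInDegs wt U D) (hDE : D ⊆ E) : GenInDegs wt U E :=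
  let ⟨G, hGU, hGD, hUG⟩ := h
  ⟨G, hGU, fun g hg => hDE (hGD g hg), hUG⟩

lemma GenInDegs.mdeg_mem_of_mem_minGens (h : GenInDegs wt U D) (hg : g ∈ minGens U) :
    mdeg wt g ∈ D := by
  obtain ⟨G, hGU, hGD, hUG⟩ := h
  obtain ⟨g', hg'G, hg'g⟩ := (hUG g).mp hg.1
  exact hg.2 g' (hGU hg'G) hg'g ▸ hGD g' hg'G

end MonomialIdeal

section Hilbert

variable {n : ℕ} {A : Type*} [AddCommGroup A] {wt : Fin n → A} {U V : Set (Fin n →₀ ℕ)} {a : A}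

lemma HF_congr (h : ∀ u, mdeg wt u = a → (u ∈ U ↔ u ∈ V)) : HF wt U a = HF wt V a := by
  unfold HF
  congr 1
  ext u
  simp only [Set.mem_ofPred_eq]
  exact and_congr_right fun hu => not_congr (h u hu)

variable (hpos : ∀ a : A, {u : Fin n →₀ ℕ | mdeg wt u = a}.Finite)
include hpos

lemma HF_eq_zero_iff : HF wt U a = 0 ↔ ∀ u, mdeg wt u = a → u ∈ U := by
  rw [HF, Set.ncard_eq_zero ((hpos a).subset fun _ hu => hu.1), Set.eq_empty_iff_forall_notMem]
  simp

lemma mem_of_HF_eq (hVU : V ⊆ U) (hHF : HF wt V a = HF wt U a) {u : Fin n →₀ ℕ} (hu : u ∈ U)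
    (hua : mdeg wt u = a) : u ∈ V := by
  have hsub : {u | mdeg wt u = a ∧ u ∉ U} ⊆ {u | mdeg wt u = a ∧ u ∉ V} :=
    fun _ hv => ⟨hv.1, fun h => hv.2 (hVU h)⟩
  have heq := Set.eq_of_subset_of_ncard_le hsub hHF.le ((hpos a).subset fun _ hu => hu.1)
  by_contra huV
  have : u ∈ {u | mdeg wt u = a ∧ u ∉ U} := heq ▸ ⟨hua, huV⟩
  exact this.2 hu

end Hilbert

section Truncation

variable {n : ℕ} {A : Type*} [AddCommGroup A]

def highIdeal (wt : Fin n → A) (φ : A →+ ℤ) (N : ℤ) : Set (Fin n →₀ ℕ) :=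
  {u | N ≤ φ (mdeg wt u)}

def lowPart (wt : Fin n → A) (φ : A →+ ℤ) (N : ℤ) (U : Set (Fin n →₀ ℕ)) :
    Set (Fin n →₀ ℕ) :=
  upperClosure {g ∈ U | φ (mdeg wt g) < N}

/-- Clause (h) of `VerySupportive`. -/
def HFDeterminedOn (wt : Fin n → A) (h : A → ℕ) (D : Set A) : Prop :=
  ∀ U : Set (Fin n →₀ ℕ), UpSet U → GenInDegs wt U D →
    (∀ a ∈ D, HF wt U a = h a) → ∀ a, HF wt U a = h a

variable {wt : Fin n → A} {φ : A →+ ℤ} {N : ℤ} {U : Set (Fin n →₀ ℕ)} {u : Fin n →₀ ℕ}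

lemma lowPart_subset (hU : UpSet U) : lowPart wt φ N U ⊆ U := fun _ hu =>
  let ⟨_, hg, hgu⟩ := mem_upperClosure.mp hu
  hU.isUpperSet hgu hg.1

lemma mem_lowPart (hu : u ∈ U) (hlt : φ (mdeg wt u) < N) : u ∈ lowPart wt φ N U :=
  subset_upperClosure ⟨hu, hlt⟩

lemma HF_lowPart (hU : UpSet U) {a : A} (ha : φ a < N) :
    HF wt (lowPart wt φ N U) a = HF wt U a :=
  HF_congr fun _ hua => ⟨fun hu => lowPart_subset hU hu, fun hu => mem_lowPart hu (hua ▸ ha)⟩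

variable (hd : ∀ u : Fin n →₀ ℕ, u ≠ 0 → 0 < φ (mdeg wt u))
include hd

lemma setOf_exists_le_eq_highIdeal :
    {u : Fin n →₀ ℕ | ∃ g ≤ u, N ≤ φ (mdeg wt g)} = highIdeal wt φ N :=
  Set.ext fun u => ⟨fun ⟨_, hgu, hg⟩ => hg.trans (phi_mdeg_mono hd hgu), fun hu => ⟨u, le_rfl, hu⟩⟩

lemma exists_single_mem_minGens_highIdeal (hN : 0 < N) (j : Fin n) :
    ∃ m ≠ 0, Finsupp.single j m ∈ minGens (highIdeal wt φ N) := by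
  have hj : Finsupp.single j N.toNat ∈ highIdeal wt φ N := by
    show N ≤ φ (mdeg wt _)
    rw [mdeg_single, map_nsmul, nsmul_eq_mul]
    nlinarith [one_le_phi_wt hd j, Int.toNat_of_nonneg hN.le]
  obtain ⟨g, hg, hgj⟩ := exists_minGens_le hj
  have hg_eq : g = Finsupp.single j (g j) := by
    ext i
    by_cases hij : i = j
    · simp [hij]
    · simpa [Finsupp.single_apply, Ne.symm hij] using hgj i
  refine ⟨g j, fun h0 => ?_, hg_eq ▸ hg⟩
  have : N ≤ φ (mdeg wt g) := minGens_subset hg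
  rw [hg_eq, h0, Finsupp.single_zero, mdeg_zero, map_zero] at this
  omega

lemma minGens_lowPart (hU : UpSet U) :
    minGens (lowPart wt φ N U) = {g ∈ minGens U | φ (mdeg wt g) < N} := by
  ext g
  constructor
  · rintro ⟨hgV, hmin⟩
    obtain ⟨g', ⟨hg'U, hg'N⟩, hg'g⟩ := mem_upperClosure.mp hgV
    obtain rfl := hmin g' (mem_lowPart hg'U hg'N) hg'g
    exact ⟨⟨hg'U, fun v hv hvg => hmin v (mem_lowPart hv
      ((phi_mdeg_mono hd hvg).trans_lt hg'N)) hvg⟩, hg'N⟩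
  · rintro ⟨hg, hgN⟩
    exact mem_minGens_of_subset (lowPart_subset hU) hg (mem_lowPart hg.1 hgN)

lemma GenInDegs.lowPart {D : Set A} (h : GenInDegs wt U D) :
    GenInDegs wt (lowPart wt φ N U) {a ∈ D | φ a < N} := by
  obtain ⟨G, hGU, hGD, hUG⟩ := h
  have hlow : _root_.lowPart wt φ N U = upperClosure {g ∈ G | φ (mdeg wt g) < N} := by
    ext u
    simp only [_root_.lowPart, SetLike.mem_coe, mem_upperClosure]
    constructor
    · rintro ⟨v, ⟨hvU, hvN⟩, hvu⟩
      obtain ⟨g, hgG, hgv⟩ := (hUG v).mp hvU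
      exact ⟨g, ⟨hgG, (phi_mdeg_mono hd hgv).trans_lt hvN⟩, hgv.trans hvu⟩
    · rintro ⟨g, ⟨hgG, hgN⟩, hgu⟩
      exact ⟨g, ⟨hGU hgG, hgN⟩, hgu⟩
  exact hlow ▸ genInDegs_upperClosure fun g hg => ⟨hGD g hg.1, hg.2⟩

variable {h : A → ℕ} {D : Set A} (hDh : HFDeterminedOn wt h D) (hDN : ∀ a ∈ D, φ a < N)
include hDh hDN
omit hd

lemma HF_lowPart_eq (hU : UpSet U) (hgen : GenInDegs wt (lowPart wt φ N U) D)
    (hUD : ∀ a ∈ D, HF wt U a = h a) (a : A) : HF wt (lowPart wt φ N U) a = h a :=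
  hDh _ (upSet_upperClosure _) hgen (fun a ha => (HF_lowPart hU (hDN a ha)).trans (hUD a ha)) a

lemma genInDegs_lowPart (hpos : ∀ a : A, {u : Fin n →₀ ℕ | mdeg wt u = a}.Finite)
    (hU : UpSet U) (hUlow : ∀ a, φ a < N → HF wt U a = h a) :
    GenInDegs wt (lowPart wt φ N U) D := by
  set V := lowPart wt φ N U
  -- the part `V'` of `V` generated in degrees in `D` has Hilbert function `h`, hence equals `V`
  set V' : Set (Fin n →₀ ℕ) := ↑(upperClosure {g ∈ V | mdeg wt g ∈ D})
  have hV'V : V' ⊆ V := fun _ hu =>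
    let ⟨_, hg, hgu⟩ := mem_upperClosure.mp hu
    (upperClosure _).upper hgu hg.1
  have hV'gen : GenInDegs wt V' D := genInDegs_upperClosure fun _ hg => hg.2
  have hV'HF : ∀ a, HF wt V' a = h a := hDh V' (upSet_upperClosure _) hV'gen fun a ha => by
    rw [HF_congr (V := V) fun _ hu => ⟨fun h => hV'V h, fun h => subset_upperClosure ⟨h, hu ▸ ha⟩⟩,
      HF_lowPart hU (hDN a ha), hUlow a (hDN a ha)]
  have hVV' : V = V' := by
    refine Set.Subset.antisymm (fun u hu => ?_) hV'V
    obtain ⟨g, ⟨hgU, hgN⟩, hgu⟩ := mem_upperClosure.mp hu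
    have hgV' : g ∈ V' := mem_of_HF_eq hpos hV'V
      (by rw [hV'HF, HF_lowPart hU hgN, hUlow _ hgN]) (mem_lowPart hgU hgN) rfl
    exact (upperClosure _).upper hgu hgV'
  exact hVV' ▸ hV'gen

end Truncation

section Syzygy

variable (K : Type*) [Field K] {n : ℕ} {G : Set (Fin n →₀ ℕ)}

noncomputable def syzBinom (M : Fin n →₀ ℕ) (g g' : G) : G →₀ MvPolynomial (Fin n) K :=
  Finsupp.single g (monomial (M - (g : Fin n →₀ ℕ)) 1) -
    Finsupp.single g' (monomial (M - (g' : Fin n →₀ ℕ)) 1)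

variable {K} {M L : Fin n →₀ ℕ}

lemma syzBinom_add_syzBinom (g g' g'' : G) :
    syzBinom K M g g' + syzBinom K M g' g'' = syzBinom K M g g'' :=
  sub_add_sub_cancel _ _ _

lemma neg_syzBinom (g g' : G) : -syzBinom K M g g' = syzBinom K M g' g :=
  neg_sub _ _

lemma monomial_smul_syzBinom {g g' : G} (hg : (g : Fin n →₀ ℕ) ≤ L) (hg' : (g' : Fin n →₀ ℕ) ≤ L)
    (hLM : L ≤ M) : monomial (M - L) (1 : K) • syzBinom K L g g' = syzBinom K M g g' := by
  simp only [syzBinom, smul_sub, Finsupp.smul_single, smul_eq_mul, monomial_mul, one_mul,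
    tsub_add_tsub_cancel hLM hg, tsub_add_tsub_cancel hLM hg']

lemma syzBinom_mem_of_le {W : Submodule (MvPolynomial (Fin n) K) (G →₀ MvPolynomial (Fin n) K)}
    {g g' : G} (h : syzBinom K L g g' ∈ W) (hg : (g : Fin n →₀ ℕ) ≤ L)
    (hg' : (g' : Fin n →₀ ℕ) ≤ L) (hLM : L ≤ M) : syzBinom K M g g' ∈ W :=
  monomial_smul_syzBinom (K := K) hg hg' hLM ▸ W.smul_mem _ h

lemma syzMap_single (g : G) (p : MvPolynomial (Fin n) K) :
    syzMap K G (Finsupp.single g p) = p * monomial (g : Fin n →₀ ℕ) 1 := by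
  simp [syzMap, Finsupp.linearCombination_single]

lemma syzBinom_mem_ker {g g' : G} (hg : (g : Fin n →₀ ℕ) ≤ M) (hg' : (g' : Fin n →₀ ℕ) ≤ M) :
    syzBinom K M g g' ∈ LinearMap.ker (syzMap K G) := by
  rw [LinearMap.mem_ker, syzBinom, map_sub, syzMap_single, syzMap_single, monomial_mul,
    monomial_mul, tsub_add_cancel_of_le hg, tsub_add_cancel_of_le hg', sub_self]

lemma ker_syzMap_le (W : Submodule (MvPolynomial (Fin n) K) (G →₀ MvPolynomial (Fin n) K))
    (hW : ∀ (M : Fin n →₀ ℕ) (g g' : G), (g : Fin n →₀ ℕ) ≤ M → (g' : Fin n →₀ ℕ) ≤ M →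
      syzBinom K M g g' ∈ W) :
    LinearMap.ker (syzMap K G) ≤ W := by
  classical
  -- a `K`-linear map `ρ` sending `x^M` to `x^{M-g} e_g` for a chosen generator `g ≤ M`; then
  -- `s - ρ (syzMap s)` is a combination of binomial syzygies, and `ρ (syzMap s) = 0` on the kernel
  let r : (Fin n →₀ ℕ) → (G →₀ MvPolynomial (Fin n) K) := fun M =>
    if h : ∃ g : G, (g : Fin n →₀ ℕ) ≤ M then
      Finsupp.single h.choose (monomial (M - (h.choose : Fin n →₀ ℕ)) 1)
    else 0
  let ρ := (basisMonomials (Fin n) K).constr K r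
  have hρ : ∀ s, s - ρ (syzMap K G s) ∈ W := by
    intro s
    induction s using Finsupp.induction_linear with
    | zero => simp
    | add s t hs ht => simpa only [map_add, add_sub_add_comm] using W.add_mem hs ht
    | single g p =>
      induction p using MvPolynomial.induction_on' with
      | monomial m c =>
        set M := m + (g : Fin n →₀ ℕ)
        have h : ∃ g' : G, (g' : Fin n →₀ ℕ) ≤ M := ⟨g, le_add_self⟩
        have hρm : ρ (monomial M c) = c • r M := by
          rw [← mul_one c, ← smul_eq_mul, ← smul_monomial, map_smul, smul_eq_mul, mul_one]
          exact congrArg (c • ·) ((basisMonomials (Fin n) K).constr_basis K r M)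
        have : Finsupp.single g (monomial m c) - c • r M =
            c • syzBinom K M g h.choose := by
          simp only [r, M, dif_pos h, syzBinom, add_tsub_cancel_right, smul_sub,
            Finsupp.smul_single, smul_monomial, smul_eq_mul, mul_one]
        rw [syzMap_single, monomial_mul, mul_one, hρm, this]
        exact W.smul_of_tower_mem c (hW _ _ _ le_add_self h.choose_spec)
      | add p q hp hq =>
        simpa only [Finsupp.single_add, map_add, add_sub_add_comm] using W.add_mem hp hq
  intro s hs
  simpa [LinearMap.mem_ker.mp hs] using hρ s

variable {A : Type*} [AddCommGroup A] {wt : Fin n → A} {E : Set A}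

lemma syzBinom_sup_apply_self [DecidableEq G] (g r : G) :
    syzBinom K ((g : Fin n →₀ ℕ) ⊔ r) g r g =
      if r = g then 0 else monomial (((g : Fin n →₀ ℕ) ⊔ r) - (g : Fin n →₀ ℕ)) 1 := by
  split_ifs with h <;> simp [syzBinom, h, Ne.symm]

lemma exists_sup_le_of_syzBinom_mem_span {g g' : G} (hne : g' ≠ g)
    (hmem : syzBinom K ((g : Fin n →₀ ℕ) ⊔ g') g g' ∈
      Submodule.span (MvPolynomial (Fin n) K) (koszulSyz K wt G E)) :
    ∃ r : G, r ≠ g ∧ mdeg wt ((g : Fin n →₀ ℕ) ⊔ r) ∈ E ∧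
      (g : Fin n →₀ ℕ) ⊔ r ≤ (g : Fin n →₀ ℕ) ⊔ g' := by
  classical
  -- compare `e_g`-components: they lie in the monomial ideal of the `x^{lcm(g, r) - g}`
  set T := {d | ∃ r : G, r ≠ g ∧ mdeg wt ((g : Fin n →₀ ℕ) ⊔ r) ∈ E ∧
    d = ((g : Fin n →₀ ℕ) ⊔ r) - (g : Fin n →₀ ℕ)}
  set I := Ideal.span ((fun d => monomial d (1 : K)) '' T)
  have hmono : ∀ r : G, mdeg wt ((g : Fin n →₀ ℕ) ⊔ r) ∈ E →
      syzBinom K ((g : Fin n →₀ ℕ) ⊔ r) g r g ∈ I := fun r hr => by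
    rw [syzBinom_sup_apply_self]
    split_ifs with h
    · exact I.zero_mem
    · exact Ideal.subset_span ⟨_, ⟨r, h, hr, rfl⟩, rfl⟩
  have hspan : Submodule.span _ (koszulSyz K wt G E) ≤ Submodule.comap (Finsupp.lapply g) I := by
    rw [Submodule.span_le]
    rintro _ ⟨u, v, huv, rfl⟩
    change syzBinom K ((u : Fin n →₀ ℕ) ⊔ v) u v g ∈ I
    by_cases hu : u = g
    · subst hu
      exact hmono v huv
    by_cases hv : v = g
    · subst hv
      rw [← neg_syzBinom, Finsupp.neg_apply, sup_comm]
      exact I.neg_mem (hmono u (sup_comm (u : Fin n →₀ ℕ) v ▸ huv))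
    · simp [syzBinom, Ne.symm hu, Ne.symm hv]
  have hg : monomial (((g : Fin n →₀ ℕ) ⊔ g') - (g : Fin n →₀ ℕ)) (1 : K) ∈ I := by
    simpa [syzBinom_sup_apply_self, hne] using hspan hmem
  obtain ⟨_, ⟨r, hr, hrE, rfl⟩, hle⟩ := mem_ideal_span_monomial_image.mp hg
    (((g : Fin n →₀ ℕ) ⊔ g') - (g : Fin n →₀ ℕ)) (by simp [support_monomial])
  exact ⟨r, hr, hrE, (tsub_le_tsub_iff_right le_sup_left).mp hle⟩

lemma span_koszulSyz_le_ker :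
    Submodule.span (MvPolynomial (Fin n) K) (koszulSyz K wt G E) ≤ LinearMap.ker (syzMap K G) :=
  Submodule.span_le.mpr fun _ ⟨_, _, _, hs⟩ => hs ▸ syzBinom_mem_ker le_sup_left le_sup_right

variable {H : Set (Fin n →₀ ℕ)} (sel : G → H)

/-- For `sel g ≤ g`, this lifts the inclusion of the monomial ideal generated by `G` into the one
generated by `H` to the free modules on the generators. -/
noncomputable def transfer : (G →₀ MvPolynomial (Fin n) K) →ₗ[MvPolynomial (Fin n) K]
    (H →₀ MvPolynomial (Fin n) K) :=
  Finsupp.linearCombination _ fun g =>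
    Finsupp.single (sel g) (monomial ((g : Fin n →₀ ℕ) - (sel g : Fin n →₀ ℕ)) 1)

variable {sel} (hsel : ∀ g, (sel g : Fin n →₀ ℕ) ≤ g)
include hsel

lemma transfer_syzBinom {g g' : G} (hg : (g : Fin n →₀ ℕ) ≤ M) (hg' : (g' : Fin n →₀ ℕ) ≤ M) :
    transfer sel (syzBinom K M g g') = syzBinom K M (sel g) (sel g') := by
  simp only [transfer, syzBinom, map_sub, Finsupp.linearCombination_single, Finsupp.smul_single,
    smul_eq_mul, monomial_mul, one_mul, tsub_add_tsub_cancel hg (hsel g),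
    tsub_add_tsub_cancel hg' (hsel g')]

lemma syzBinom_sel_mem_of_ker_eq_span
    (hker : LinearMap.ker (syzMap K G) =
      Submodule.span (MvPolynomial (Fin n) K) (koszulSyz K wt G E))
    (W : Submodule (MvPolynomial (Fin n) K) (H →₀ MvPolynomial (Fin n) K))
    (hW : ∀ u v : G, mdeg wt ((u : Fin n →₀ ℕ) ⊔ v) ∈ E →
      syzBinom K ((u : Fin n →₀ ℕ) ⊔ v) (sel u) (sel v) ∈ W) (p q : G) :
    syzBinom K ((p : Fin n →₀ ℕ) ⊔ q) (sel p) (sel q) ∈ W := by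
  have hspan : Submodule.span _ (koszulSyz K wt G E) ≤ W.comap (transfer sel) := by
    rw [Submodule.span_le]
    rintro _ ⟨u, v, huv, rfl⟩
    change transfer sel (syzBinom K ((u : Fin n →₀ ℕ) ⊔ v) u v) ∈ W
    rw [transfer_syzBinom hsel le_sup_left le_sup_right]
    exact hW u v huv
  have := hspan (hker ▸ syzBinom_mem_ker (g := p) (g' := q) le_sup_left le_sup_right)
  rwa [Submodule.mem_comap, transfer_syzBinom hsel le_sup_left le_sup_right] at this

end Syzygy

section HighIdeal

variable {K : Type*} [Field K] {n : ℕ} {A : Type*} [AddCommGroup A] {wt : Fin n → A}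
  {φ : A →+ ℤ} {N B : ℤ}

lemma eq_or_phi_mdeg_lt_of_le_minGens {g p : Fin n →₀ ℕ} (hp : p ∈ minGens (highIdeal wt φ N))
    (hgp : g ≤ p) : g = p ∨ φ (mdeg wt g) < N := by
  by_contra! h
  exact h.1 (hp.2 g h.2 hgp)

variable (hd : ∀ u : Fin n →₀ ℕ, u ≠ 0 → 0 < φ (mdeg wt u))
include hd

/-- The syzygy between the pure powers of `x_j` and `x_i` in the high ideal must be generated
by Koszul pairs `(x_j^m, r)`, and such an lcm has degree `≥ N + φ (wt j)`. -/
lemma add_phi_wt_le (hN : 0 < N)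
    (hB : LinearMap.ker (syzMap K (minGens (highIdeal wt φ N))) =
      Submodule.span (MvPolynomial (Fin n) K)
        (koszulSyz K wt (minGens (highIdeal wt φ N)) {a : A | φ a ≤ B}))
    {i j : Fin n} (hij : i ≠ j) : N + φ (wt j) ≤ B := by
  obtain ⟨m, hm, hp⟩ := exists_single_mem_minGens_highIdeal hd hN j
  obtain ⟨m', -, hq⟩ := exists_single_mem_minGens_highIdeal hd hN i
  have hne : (⟨_, hq⟩ : minGens (highIdeal wt φ N)) ≠ ⟨_, hp⟩ := fun h => hm <| by
    simpa [hij] using (congrArg (fun x : minGens (highIdeal wt φ N) => (x : Fin n →₀ ℕ) j) h).symm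
  obtain ⟨r, hrp, hrB, -⟩ := exists_sup_le_of_syzBinom_mem_span hne
    (hB ▸ syzBinom_mem_ker le_sup_left le_sup_right)
  have hrj : (r : Fin n →₀ ℕ) j < m := by
    by_contra! h
    exact hrp (Subtype.ext (r.2.2 _ (minGens_subset hp) (Finsupp.single_le_iff.mpr h)).symm)
  have hle : (r : Fin n →₀ ℕ) + Finsupp.single j 1 ≤ Finsupp.single j m ⊔ r := fun k => by
    by_cases hk : k = j
    · subst hk
      simp only [Finsupp.add_apply, Finsupp.sup_apply, Finsupp.single_eq_same]
      omega
    · simp [Ne.symm hk]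
  have hrN : N ≤ φ (mdeg wt r) := minGens_subset r.2
  calc N + φ (wt j) ≤ φ (mdeg wt ((r : Fin n →₀ ℕ) + Finsupp.single j 1)) := by
        rw [mdeg_add, map_add, mdeg_single, one_nsmul]
        omega
    _ ≤ φ (mdeg wt (Finsupp.single j m ⊔ r)) := phi_mdeg_mono hd hle
    _ ≤ B := hrB

lemma phi_mdeg_sup_lt_of_forall_le {u q : Fin n →₀ ℕ}
    (hmin : ∀ w ∈ minGens (highIdeal wt φ N), w ≤ u ⊔ q →
      φ (mdeg wt (u ⊔ q)) ≤ φ (mdeg wt (u ⊔ w)))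
    {j : Fin n} (hj : u j < q j) : φ (mdeg wt (u ⊔ q)) < N + φ (wt j) := by
  -- lowering the `x_j`-exponent of `lcm(u, q)` by one leaves the high ideal, by minimality
  set c := u ⊔ q - Finsupp.single j 1
  have hc : c + Finsupp.single j 1 = u ⊔ q :=
    tsub_add_cancel_of_le (Finsupp.single_le_iff.mpr (by rw [Finsupp.sup_apply]; omega))
  have huc : u ≤ c := fun k => by
    by_cases hk : k = j
    · subst hk
      simp only [c, Finsupp.tsub_apply, Finsupp.sup_apply, Finsupp.single_eq_same]
      omega
    · simp [c, Ne.symm hk]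
  have hdeg : φ (mdeg wt (u ⊔ q)) = φ (mdeg wt c) + φ (wt j) := by
    rw [← hc, mdeg_add, map_add, mdeg_single, one_nsmul]
  suffices φ (mdeg wt c) < N by omega
  by_contra! hcN
  obtain ⟨w, hw, hwc⟩ := exists_minGens_le (show c ∈ highIdeal wt φ N from hcN)
  have h1 := hmin w hw (hwc.trans tsub_le_self)
  have h2 := phi_mdeg_mono hd (sup_le huc hwc)
  linarith [one_le_phi_wt hd j]

lemma phi_mdeg_sup_le_of_forall_le (hN : 0 < N)
    (hB : LinearMap.ker (syzMap K (minGens (highIdeal wt φ N))) =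
      Submodule.span (MvPolynomial (Fin n) K)
        (koszulSyz K wt (minGens (highIdeal wt φ N)) {a : A | φ a ≤ B}))
    {u q : Fin n →₀ ℕ} (hu : φ (mdeg wt u) < N) (hq : N ≤ φ (mdeg wt q)) (huq : ¬u ≤ q)
    (hmin : ∀ w ∈ minGens (highIdeal wt φ N), w ≤ u ⊔ q →
      φ (mdeg wt (u ⊔ q)) ≤ φ (mdeg wt (u ⊔ w))) :
    φ (mdeg wt (u ⊔ q)) ≤ B := by
  obtain ⟨i, hi⟩ : ∃ i, q i < u i := by
    by_contra! h
    exact huq fun i => h i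
  obtain ⟨j, hj⟩ : ∃ j, u j < q j := by
    by_contra! h
    linarith [phi_mdeg_mono hd (fun i => h i : q ≤ u)]
  have hij : i ≠ j := fun h => by subst h; omega
  linarith [phi_mdeg_sup_lt_of_forall_le hd hmin hj, add_phi_wt_le (K := K) hd hN hB hij]

end HighIdeal

section TruncatedSyzygies

variable {K : Type*} [Field K] {n : ℕ} {A : Type*} [AddCommGroup A] {wt : Fin n → A}
  {φ : A →+ ℤ} {N B : ℤ} {U : Set (Fin n →₀ ℕ)} {D D' : Set A}
  (hd : ∀ u : Fin n →₀ ℕ, u ≠ 0 → 0 < φ (mdeg wt u))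
include hd

lemma syzBinom_mem_span_of_lowPart (hU : UpSet U) (hDD' : D ⊆ D')
    (hker : LinearMap.ker (syzMap K (minGens (lowPart wt φ N U))) =
      Submodule.span (MvPolynomial (Fin n) K) (koszulSyz K wt (minGens (lowPart wt φ N U)) D))
    {g g' : minGens U} (hg : φ (mdeg wt (g : Fin n →₀ ℕ)) < N)
    (hg' : φ (mdeg wt (g' : Fin n →₀ ℕ)) < N) :
    syzBinom K ((g : Fin n →₀ ℕ) ⊔ g') g g' ∈
      Submodule.span (MvPolynomial (Fin n) K) (koszulSyz K wt (minGens U) D') := by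
  have hgens := minGens_lowPart (N := N) hd hU
  let incl : minGens (lowPart wt φ N U) → minGens U := fun v => ⟨v, (hgens.subset v.2).1⟩
  exact syzBinom_sel_mem_of_ker_eq_span (sel := incl) (fun _ => le_rfl) hker _
    (fun u v huv => Submodule.subset_span (⟨incl u, incl v, hDD' huv, rfl⟩ :
      syzBinom K ((u : Fin n →₀ ℕ) ⊔ v) (incl u) (incl v) ∈ koszulSyz K wt (minGens U) D'))
    ⟨g, hgens.symm.subset ⟨g.2, hg⟩⟩ ⟨g', hgens.symm.subset ⟨g'.2, hg'⟩⟩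

variable (hD' : ∀ u, N ≤ φ (mdeg wt u) → φ (mdeg wt u) ≤ B → mdeg wt u ∈ D')
  (hlow : ∀ g g' : minGens U, φ (mdeg wt (g : Fin n →₀ ℕ)) < N →
    φ (mdeg wt (g' : Fin n →₀ ℕ)) < N → syzBinom K ((g : Fin n →₀ ℕ) ⊔ g') g g' ∈
      Submodule.span (MvPolynomial (Fin n) K) (koszulSyz K wt (minGens U) D'))
include hD' hlow

lemma syzBinom_mem_span_of_phi_mdeg_le {g g' : minGens U}
    (h : φ (mdeg wt ((g : Fin n →₀ ℕ) ⊔ g')) ≤ B) :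
    syzBinom K ((g : Fin n →₀ ℕ) ⊔ g') g g' ∈
      Submodule.span (MvPolynomial (Fin n) K) (koszulSyz K wt (minGens U) D') := by
  by_cases hlt : φ (mdeg wt ((g : Fin n →₀ ℕ) ⊔ g')) < N
  · exact hlow g g' ((phi_mdeg_mono hd le_sup_left).trans_lt hlt)
      ((phi_mdeg_mono hd le_sup_right).trans_lt hlt)
  · exact Submodule.subset_span ⟨g, g', hD' _ (not_lt.mp hlt) h, rfl⟩

variable (hUN : highIdeal wt φ N ⊆ U)
  (hB : LinearMap.ker (syzMap K (minGens (highIdeal wt φ N))) =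
    Submodule.span (MvPolynomial (Fin n) K)
      (koszulSyz K wt (minGens (highIdeal wt φ N)) {a : A | φ a ≤ B}))
include hUN hB

lemma exists_le_forall_syzBinom_mem {q : Fin n →₀ ℕ} (hq : q ∈ minGens (highIdeal wt φ N)) :
    ∃ g : minGens U, (g : Fin n →₀ ℕ) ≤ q ∧ ∀ (M : Fin n →₀ ℕ) (p : minGens U),
      N ≤ φ (mdeg wt (p : Fin n →₀ ℕ)) → q ≤ M → (p : Fin n →₀ ℕ) ≤ M →
      syzBinom K M g p ∈
        Submodule.span (MvPolynomial (Fin n) K) (koszulSyz K wt (minGens U) D') := by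
  choose sel hsel hsel_le using fun p : minGens (highIdeal wt φ N) =>
    exists_minGens_le (hUN (minGens_subset p.2))
  let sel' : minGens (highIdeal wt φ N) → minGens U := fun p => ⟨sel p, hsel p⟩
  have htransfer := syzBinom_sel_mem_of_ker_eq_span (sel := sel') hsel_le hB _ fun a b hab =>
    syzBinom_mem_of_le (syzBinom_mem_span_of_phi_mdeg_le hd hD' hlow
      ((phi_mdeg_mono hd (sup_le_sup (hsel_le a) (hsel_le b))).trans hab))
      le_sup_left le_sup_right (sup_le_sup (hsel_le a) (hsel_le b))
  refine ⟨sel' ⟨q, hq⟩, hsel_le _, fun M p hp hqM hpM => ?_⟩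
  have hpH := mem_minGens_of_subset hUN p.2 hp
  have := htransfer ⟨q, hq⟩ ⟨p, hpH⟩
  rw [show sel' ⟨p, hpH⟩ = p from Subtype.ext (p.2.2 _ (hsel _).1 (hsel_le _))] at this
  exact syzBinom_mem_of_le this ((hsel_le _).trans le_sup_left) le_sup_right (sup_le hqM hpM)

lemma syzBinom_mem_span_of_lt_of_le (hN : 0 < N) {M : Fin n →₀ ℕ} {u p : minGens U}
    (huM : (u : Fin n →₀ ℕ) ≤ M) (hpM : (p : Fin n →₀ ℕ) ≤ M)
    (hu : φ (mdeg wt (u : Fin n →₀ ℕ)) < N) (hp : N ≤ φ (mdeg wt (p : Fin n →₀ ℕ))) :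
    syzBinom K M u p ∈
      Submodule.span (MvPolynomial (Fin n) K) (koszulSyz K wt (minGens U) D') := by
  -- link `u` to `p` through a generator `q ≤ M` of the high ideal minimising `lcm(u, q)`
  obtain ⟨q, ⟨hq, hqM⟩, hqmin⟩ := Set.exists_min_image
    {w | w ∈ minGens (highIdeal wt φ N) ∧ w ≤ M} (fun w => φ (mdeg wt ((u : Fin n →₀ ℕ) ⊔ w)))
    ((Set.finite_Iic M).subset fun _ hw => hw.2) ⟨p, mem_minGens_of_subset hUN p.2 hp, hpM⟩
  obtain ⟨g, hgq, hg⟩ := exists_le_forall_syzBinom_mem hd hD' hlow hUN hB hq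
  have hug : syzBinom K M u g ∈
      Submodule.span (MvPolynomial (Fin n) K) (koszulSyz K wt (minGens U) D') := by
    refine syzBinom_mem_of_le ?_ le_sup_left le_sup_right (sup_le huM (hgq.trans hqM))
    rcases eq_or_phi_mdeg_lt_of_le_minGens hq hgq with hgq | hgN
    · refine syzBinom_mem_span_of_phi_mdeg_le hd hD' hlow (hgq ▸ ?_)
      refine phi_mdeg_sup_le_of_forall_le hd hN hB hu (minGens_subset hq) (fun huq => ?_)
        fun w hw hwuq => hqmin w ⟨hw, hwuq.trans (sup_le huM hqM)⟩
      have hqN : N ≤ φ (mdeg wt q) := minGens_subset hq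
      rw [g.2.2 u u.2.1 (hgq ▸ huq), hgq] at hu
      omega
    · exact hlow u g hu hgN
  simpa only [syzBinom_add_syzBinom] using add_mem hug (hg M p hp hqM hpM)

lemma ker_syzMap_le_span (hN : 0 < N) :
    LinearMap.ker (syzMap K (minGens U)) ≤
      Submodule.span (MvPolynomial (Fin n) K) (koszulSyz K wt (minGens U) D') := by
  refine ker_syzMap_le _ fun M g g' hg hg' => ?_
  rcases lt_or_ge (φ (mdeg wt (g : Fin n →₀ ℕ))) N with hgN | hgN <;>
    rcases lt_or_ge (φ (mdeg wt (g' : Fin n →₀ ℕ))) N with hg'N | hg'N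
  · exact syzBinom_mem_of_le (hlow g g' hgN hg'N) le_sup_left le_sup_right (sup_le hg hg')
  · exact syzBinom_mem_span_of_lt_of_le hd hD' hlow hUN hB hN hg hg' hgN hg'N
  · exact neg_syzBinom (K := K) g' g ▸
      neg_mem (syzBinom_mem_span_of_lt_of_le hd hD' hlow hUN hB hN hg' hg hg'N hgN)
  · obtain ⟨g₀, hg₀, hlink⟩ :=
      exists_le_forall_syzBinom_mem hd hD' hlow hUN hB (mem_minGens_of_subset hUN g.2 hgN)
    obtain rfl : g₀ = g := Subtype.ext (g.2.2 _ g₀.2.1 hg₀)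
    exact hlink M g' hg'N hg hg'

end TruncatedSyzygies

section Clauses

variable {K : Type*} [Field K] {n : ℕ} {A : Type*} [AddCommGroup A] {wt : Fin n → A}
  {φ : A →+ ℤ} {N B : ℤ} {U : Set (Fin n →₀ ℕ)} {h hbar : A → ℕ} {D D' : Set A}
  (hpos : ∀ a : A, {u : Fin n →₀ ℕ | mdeg wt u = a}.Finite)
  (hhbar : ∀ a, hbar a = if φ a < N then h a else 0)
include hpos hhbar

lemma highIdeal_subset_of_HF_eq (hU : UpSet U) (hHF : ∀ a, HF wt U a = hbar a) :
    highIdeal wt φ N ⊆ U :=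
  subset_of_minGens_subset hU fun g hg => (HF_eq_zero_iff hpos).mp
    (by rw [hHF, hhbar, if_neg (not_lt.mpr (minGens_subset hg : N ≤ φ (mdeg wt g)))]) g rfl

variable (hd : ∀ u : Fin n →₀ ℕ, u ≠ 0 → 0 < φ (mdeg wt u))
  (hDh : HFDeterminedOn wt h D) (hDN : ∀ a ∈ D, φ a < N) (hDD' : D ⊆ D')
  (hD' : ∀ u, N ≤ φ (mdeg wt u) → φ (mdeg wt u) ≤ B → mdeg wt u ∈ D')
include hd hDh hDN hDD' hD'

lemma genInDegs_of_HF_eq (hB1 : ∀ u ∈ minGens (highIdeal wt φ N), φ (mdeg wt u) ≤ B)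
    (hU : UpSet U) (hHF : ∀ a, HF wt U a = hbar a) : GenInDegs wt U D' := by
  have hUN := highIdeal_subset_of_HF_eq hpos hhbar hU hHF
  have hgen := genInDegs_lowPart hDh hDN hpos hU fun a ha => by rw [hHF, hhbar, if_pos ha]
  refine genInDegs_of_minGens hU fun g hg => ?_
  rcases lt_or_ge (φ (mdeg wt g)) N with hgN | hgN
  · exact hDD' (hgen.mdeg_mem_of_mem_minGens ((minGens_lowPart hd hU).symm.subset ⟨hg, hgN⟩))
  · exact hD' g hgN (hB1 g (mem_minGens_of_subset hUN hg hgN))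

lemma HF_eq_of_genInDegs (hB1 : ∀ u ∈ minGens (highIdeal wt φ N), φ (mdeg wt u) ≤ B)
    (hD'D : ∀ a ∈ D', φ a < N → a ∈ D) (hU : UpSet U) (hgen : GenInDegs wt U D')
    (hagree : ∀ a ∈ D', HF wt U a = hbar a) (a : A) : HF wt U a = hbar a := by
  have hUN : highIdeal wt φ N ⊆ U := subset_of_minGens_subset hU fun g hg => by
    have hgN : N ≤ φ (mdeg wt g) := minGens_subset hg
    refine (HF_eq_zero_iff hpos).mp ?_ g rfl
    rw [hagree _ (hD' g hgN (hB1 g hg)), hhbar, if_neg (not_lt.mpr hgN)]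
  rw [hhbar]
  split_ifs with ha
  · rw [← HF_lowPart hU ha]
    refine HF_lowPart_eq hDh hDN hU ((hgen.lowPart hd).mono fun a ha => hD'D a ha.1 ha.2)
      (fun a ha => ?_) a
    rw [hagree a (hDD' ha), hhbar, if_pos (hDN a ha)]
  · exact (HF_eq_zero_iff hpos).mpr fun u hu => hUN (show N ≤ φ (mdeg wt u) from hu ▸ not_lt.mp ha)

lemma ker_syzMap_eq_of_HF_eq (hN : 0 < N)
    (hDs : ∀ U, UpSet U → (∀ a, HF wt U a = h a) → LinearMap.ker (syzMap K (minGens U)) =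
      Submodule.span (MvPolynomial (Fin n) K) (koszulSyz K wt (minGens U) D))
    (hB2 : LinearMap.ker (syzMap K (minGens (highIdeal wt φ N))) =
      Submodule.span (MvPolynomial (Fin n) K)
        (koszulSyz K wt (minGens (highIdeal wt φ N)) {a : A | φ a ≤ B}))
    (hU : UpSet U) (hHF : ∀ a, HF wt U a = hbar a) :
    LinearMap.ker (syzMap K (minGens U)) =
      Submodule.span (MvPolynomial (Fin n) K) (koszulSyz K wt (minGens U) D') := by
  have hUlow : ∀ a, φ a < N → HF wt U a = h a := fun a ha => by rw [hHF, hhbar, if_pos ha]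
  have hker := hDs _ (upSet_upperClosure _) (HF_lowPart_eq hDh hDN hU
    (genInDegs_lowPart hDh hDN hpos hU hUlow) fun a ha => hUlow a (hDN a ha))
  refine le_antisymm ?_ span_koszulSyz_le_ker
  exact ker_syzMap_le_span hd hD'
    (fun _ _ hg hg' => syzBinom_mem_span_of_lowPart hd hU hDD' hker hg hg')
    (highIdeal_subset_of_HF_eq hpos hhbar hU hHF) hB2 hN

end Clauses

theorem verySupportive_truncation_general (K : Type*) [Field K] {n : ℕ} {A : Type*}
    [AddCommGroup A] (wt : Fin n → A)
    (hpos : ∀ a : A, {u : Fin n →₀ ℕ | mdeg wt u = a}.Finite)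
    (φ : A →+ ℤ)
    (hφ : ∀ a : A, a ≠ 0 → (∃ u : Fin n →₀ ℕ, mdeg wt u = a) → 0 < φ a)
    (h : A → ℕ) (D : Set A) (hD : VerySupportive K wt h D)
    (N : ℤ) (hN : 0 < N) (hDN : ∀ a ∈ D, φ a < N)
    (hbar : A → ℕ) (hhbar : ∀ a, hbar a = if φ a < N then h a else 0)
    (UN : Set (Fin n →₀ ℕ))
    (hUN : UN = {u : Fin n →₀ ℕ | ∃ g : Fin n →₀ ℕ, g ≤ u ∧ N ≤ φ (mdeg wt g)})
    (B : ℤ)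
    (hB1 : ∀ u ∈ minGens UN, φ (mdeg wt u) ≤ B)
    (hB2 : LinearMap.ker (syzMap K (minGens UN)) =
      Submodule.span (MvPolynomial (Fin n) K)
        (koszulSyz K wt (minGens UN) {a : A | φ a ≤ B}))
    (D' : Set A)
    (hD' : D' = D ∪ {a : A | (∃ u : Fin n →₀ ℕ, mdeg wt u = a) ∧ N ≤ φ a ∧ φ a ≤ B}) :
    VerySupportive K wt hbar D' := by
  have hd : ∀ u : Fin n →₀ ℕ, u ≠ 0 → 0 < φ (mdeg wt u) := fun _ => phi_mdeg_pos hpos hφ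
  obtain rfl : UN = highIdeal wt φ N := hUN.trans (setOf_exists_le_eq_highIdeal hd)
  obtain ⟨hDfin, -, hDh, hDs⟩ := hD
  have hDD' : D ⊆ D' := hD' ▸ Set.subset_union_left
  have hD'high : ∀ u, N ≤ φ (mdeg wt u) → φ (mdeg wt u) ≤ B → mdeg wt u ∈ D' :=
    fun u hlo hhi => hD' ▸ Or.inr ⟨⟨u, rfl⟩, hlo, hhi⟩
  have hD'D : ∀ a ∈ D', φ a < N → a ∈ D := fun a ha haN =>
    (hD' ▸ ha).resolve_right fun hhigh => hhigh.2.1.not_gt haN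
  have hD'fin : D'.Finite := hD' ▸ hDfin.union
    (((finite_setOf_phi_mdeg_le hd B).image (mdeg wt)).subset
      fun _ ⟨⟨u, hu⟩, _, hhi⟩ => ⟨u, (hu ▸ hhi : φ (mdeg wt u) ≤ B), hu⟩)
  exact ⟨hD'fin,
    fun _ => genInDegs_of_HF_eq hpos hhbar hd hDh hDN hDD' hD'high hB1,
    fun _ => HF_eq_of_genInDegs hpos hhbar hd hDh hDN hDD' hD'high hB1 hD'D,
    fun _ => ker_syzMap_eq_of_HF_eq hpos hhbar hd hDh hDN hDD' hD'high hN hDs hB2⟩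

/-- (Lemma 2.2.)  Suppose the `A`-grading of `S = K[x₁,…,xₙ]` is
positive and `φ : A → ℤ` is positive on all nonzero degrees of monomials.  Let `D` be a
very supportive set for `h`, let `N` exceed `φ` on `D`, and truncate `h` to `h̄` by
setting it to `0` in degrees with `φ(a) ≥ N`.  If `B ≥ N` bounds the `φ`-degrees of the
minimal generators and the minimal (Koszul) syzygies of the monomial ideal
`⟨x^u : φ(deg x^u) ≥ N⟩`, then
`D' = D ∪ {a realizable : N ≤ φ(a) ≤ B}` is very supportive for `h̄`. -/
theorem verySupportive_truncation (K : Type*) [Field K] {n : ℕ} {A : Type*}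
    [AddCommGroup A] (wt : Fin n → A)
    (hpos : ∀ a : A, {u : Fin n →₀ ℕ | mdeg wt u = a}.Finite)
    (φ : A →+ ℤ)
    (hφ : ∀ a : A, a ≠ 0 → (∃ u : Fin n →₀ ℕ, mdeg wt u = a) → 0 < φ a)
    (h : A → ℕ) (D : Set A) (hD : VerySupportive K wt h D)
    (N : ℤ) (hN : 0 < N) (hDN : ∀ a ∈ D, φ a < N)
    (hbar : A → ℕ) (hhbar : ∀ a, hbar a = if φ a < N then h a else 0)
    (UN : Set (Fin n →₀ ℕ))
    (hUN : UN = {u : Fin n →₀ ℕ | ∃ g : Fin n →₀ ℕ, g ≤ u ∧ N ≤ φ (mdeg wt g)})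
    (B : ℤ) (hNB : N ≤ B)
    (hB1 : ∀ u ∈ minGens UN, φ (mdeg wt u) ≤ B)
    (hB2 : LinearMap.ker (syzMap K (minGens UN)) =
      Submodule.span (MvPolynomial (Fin n) K)
        (koszulSyz K wt (minGens UN) {a : A | φ a ≤ B}))
    (D' : Set A)
    (hD' : D' = D ∪ {a : A | (∃ u : Fin n →₀ ℕ, mdeg wt u = a) ∧ N ≤ φ a ∧ φ a ≤ B}) :
    VerySupportive K wt hbar D' :=
  verySupportive_truncation_general K wt hpos φ hφ h D hD N hN hDN hbar hhbar UN hUN B hB1 hB2 D'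
    hD'
end

section
/- With notation as in the context, for each 0 ≤ i ≤ e the polynomial f_i ∈ K[T₊(M)][x,y] satisfies f_i = m_i + Σ_{m ∈ M_i} ( Σ_{P a path from m_i to m} a_P ) · m, where M_i = { m : m a monomial of K[x,y] with m ≺ m_i and deg(m) = deg(m_i) }. -/
open MvPolynomial
open scoped BigOperators

/-- Membership of the monomial `x^{m.1} y^{m.2}` in the monomial ideal with minimal
generators `m_j = x^{a j} y^{b j}`, `0 ≤ j ≤ e`. -/
def InM (e : ℕ) (a b : ℕ → ℕ) (m : ℕ × ℕ) : Prop :=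
  ∃ j ≤ e, a j ≤ m.1 ∧ b j ≤ m.2

/-- `jOf e b q` is the largest `j ≤ e` with `b j ≤ q`; for a monomial
`m = x^p y^q ∈ M` this computes `j(m) = max { j : m_j divides m }`. -/
def jOf (e : ℕ) (b : ℕ → ℕ) (q : ℕ) : ℕ :=
  Nat.findGreatest (fun j => b j ≤ q) e

/-- `Arrow α β e a b i ℓ`: the pair `c_i^ℓ = (m_i, ℓ)` with `ℓ > 0` is a positive
significant arrow, i.e. `m_i r^ℓ` is a monomial not in `M` and `w_i r^ℓ ∈ M`, where
`r = x^β y^{-α}` and `w_i = lcm(m_{i-1}, m_i)`. -/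
def Arrow (α β e : ℕ) (a b : ℕ → ℕ) (i ℓ : ℕ) : Prop :=
  1 ≤ i ∧ i ≤ e ∧ 1 ≤ ℓ ∧ ℓ * α ≤ b i ∧
  ¬ InM e a b (a i + ℓ * β, b i - ℓ * α) ∧
  InM e a b (a (i - 1) + ℓ * β, b i - ℓ * α)

/-- `IsPath α β e a b i P`: the list of arrows `P` is a path from the generator `m_i`.
Either `P` is a single significant arrow at `i`, or `P` is a path from `m_{i-1}`, or
`P = c_i^ℓ :: P'` with `P'` a path from `m_{j(w_i r^ℓ)}`. -/
inductive IsPath (α β e : ℕ) (a b : ℕ → ℕ) : ℕ → List (ℕ × ℕ) → Prop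
  | single (i ℓ : ℕ) : Arrow α β e a b i ℓ → IsPath α β e a b i [(i, ℓ)]
  | prev (i : ℕ) (P : List (ℕ × ℕ)) : 1 ≤ i → IsPath α β e a b (i - 1) P →
      IsPath α β e a b i P
  | cons (i ℓ : ℕ) (P : List (ℕ × ℕ)) : Arrow α β e a b i ℓ → P ≠ [] →
      IsPath α β e a b (jOf e b (b i - ℓ * α)) P →
      IsPath α β e a b i ((i, ℓ) :: P)

/-- The length `ℓ(P)` of a path. -/
def plen (P : List (ℕ × ℕ)) : ℕ := (P.map Prod.snd).sum

/-- The coefficient ring `K[T₊(M)]`: polynomials in the (potential) arrow variables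
`c_i^ℓ`, indexed by pairs `(i, ℓ)`. -/
abbrev ArrowRing (K : Type*) [Field K] := MvPolynomial (ℕ × ℕ) K

/-- `a_P`, the product of the arrow variables along a path `P`. -/
noncomputable def aP {K : Type*} [Field K] (P : List (ℕ × ℕ)) : ArrowRing K :=
  (P.map fun t => (X t : ArrowRing K)).prod

/-- The ring `K[T₊(M)][x,y]`, with `x,y`-monomials indexed by `ℕ × ℕ`. -/
abbrev XYRing (K : Type*) [Field K] := AddMonoidAlgebra (ArrowRing K) (ℕ × ℕ)

/-- The element `c · x^{m.1} y^{m.2}` of `K[T₊(M)][x,y]`. -/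
noncomputable def xymon {K : Type*} [Field K] (m : ℕ × ℕ) (c : ArrowRing K) : XYRing K :=
  AddMonoidAlgebra.single m c

/-- The lexicographic order on monomials of `K[x,y]` with `x ≺ y`. -/
def LexLt (m m' : ℕ × ℕ) : Prop :=
  m.2 < m'.2 ∨ (m.2 = m'.2 ∧ m.1 < m'.1)

/-- `EvainRec α β e a b K F`: the family `F 0, …, F e` satisfies Evain's recursion
`f_0 = m_0` and
`f_i = (m_i/m_{i-1}) f_{i-1} + Σ_{c_i^ℓ ∈ T₊(M)} c_i^ℓ (m_i r^ℓ / m_{j(w_i r^ℓ)}) f_{j(w_i r^ℓ)}`,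
written multiplied through by `x^{a_{i-1} - a_i}` so that all terms are honest
polynomials. -/
def EvainRec (α β e : ℕ) (a b : ℕ → ℕ) {K : Type*} [Field K]
    (F : ℕ → XYRing K) : Prop :=
  F 0 = xymon (a 0, 0) 1 ∧
  ∀ i, 1 ≤ i → i ≤ e →
    xymon (a (i - 1) - a i, 0) (1 : ArrowRing K) * F i =
      xymon (0, b i - b (i - 1)) (1 : ArrowRing K) * F (i - 1) +
      ∑ᶠ ℓ ∈ {ℓ : ℕ | Arrow α β e a b i ℓ},
        xymon (a (i - 1) + ℓ * β - a (jOf e b (b i - ℓ * α)),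
               b i - ℓ * α - b (jOf e b (b i - ℓ * α)))
          (X (i, ℓ) : ArrowRing K) * F (jOf e b (b i - ℓ * α))

/-- The hypotheses on the data `α, β, e, a, b` describing a monomial ideal
`M = ⟨m_0, …, m_e⟩ ⊆ K[x,y]` of finite colength with minimal generators
`m_i = x^{a i} y^{b i}` listed in increasing lexicographic (`x ≺ y`) order, for the
positive grading `deg x = α`, `deg y = β` with `α, β` coprime. -/
def MonIdealData (α β e : ℕ) (a b : ℕ → ℕ) : Prop :=
  0 < α ∧ 0 < β ∧ Nat.Coprime α β ∧
  (∀ i, i < e → a (i + 1) < a i) ∧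
  (∀ i, i < e → b i < b (i + 1)) ∧
  b 0 = 0 ∧ a e = 0

/-- The set of paths from the generator `m_i` to the monomial `m = m_i r^{ℓ(P)}`. -/
def pathsTo (α β e : ℕ) (a b : ℕ → ℕ) (i : ℕ) (m : ℕ × ℕ) : Set (List (ℕ × ℕ)) :=
  {P | IsPath α β e a b i P ∧ m.1 = a i + plen P * β ∧ m.2 + plen P * α = b i}

/-- The set `M_i` of monomials `m ≺ m_i` of the same degree as `m_i`. -/
def MsetLt (α β : ℕ) (a b : ℕ → ℕ) (i : ℕ) : Set (ℕ × ℕ) :=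
  {m : ℕ × ℕ | LexLt m (a i, b i) ∧ α * m.1 + β * m.2 = α * a i + β * b i}

/-!
Let `G_i = Σ_p (Σ_{P path from m_i, ℓ(P) = p} a_P) m_i r^p`, where the empty path contributes the
leading term `m_i`. The recursive definition of paths splits the paths from `m_i` of length `p`
disjointly into the paths from `m_{i-1}` and, for each arrow `c_i^ℓ` with `ℓ ≤ p`, the arrow
followed by a path of length `p - ℓ` from `m_{j(w_i r^ℓ)}`. Comparing coefficients of `m_i r^p`,
this says that the `G_i` satisfy Evain's recursion, which determines the `f_i`; hence `f_i = G_i`.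
Since `α` and `β` are coprime, the monomials of degree `deg m_i` below `m_i` are exactly the
`m_i r^p` with `p ≥ 1`, which rewrites `G_i` as the stated sum.
-/

section

variable {K : Type*} [Field K] {α β e : ℕ} {a b : ℕ → ℕ}

theorem jOf_le (q : ℕ) : jOf e b q ≤ e := Nat.findGreatest_le e

theorem b_jOf_le (hb0 : b 0 = 0) (q : ℕ) : b (jOf e b q) ≤ q :=
  Nat.findGreatest_spec (P := fun j => b j ≤ q) (Nat.zero_le e) (by simp [hb0])

theorem le_jOf {j q : ℕ} (hj : j ≤ e) (h : b j ≤ q) : j ≤ jOf e b q :=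
  Nat.le_findGreatest hj h

theorem jOf_lt (hb : MonotoneOn b (Set.Iic e)) (hb0 : b 0 = 0) {i q : ℕ} (hie : i ≤ e)
    (h : q < b i) : jOf e b q < i := by
  by_contra! hc
  have := hb (Set.mem_Iic.2 hie) (Set.mem_Iic.2 (jOf_le q)) hc
  have := b_jOf_le hb0 (e := e) q
  omega

theorem Arrow.one_le {i ℓ : ℕ} (hA : Arrow α β e a b i ℓ) : 1 ≤ ℓ := hA.2.2.1

theorem Arrow.mul_le {i ℓ : ℕ} (hA : Arrow α β e a b i ℓ) : ℓ * α ≤ b i := hA.2.2.2.1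

theorem Arrow.jOf_lt (hα : 0 < α) (hb : MonotoneOn b (Set.Iic e)) (hb0 : b 0 = 0) {i ℓ : ℕ}
    (hA : Arrow α β e a b i ℓ) : jOf e b (b i - ℓ * α) < i := by
  have : 0 < ℓ * α := Nat.mul_pos hA.one_le hα
  exact _root_.jOf_lt hb hb0 hA.2.1 (by have := hA.mul_le; omega)

theorem Arrow.a_jOf_le (ha : AntitoneOn a (Set.Iic e)) {i ℓ : ℕ} (hA : Arrow α β e a b i ℓ) :
    a (jOf e b (b i - ℓ * α)) ≤ a (i - 1) + ℓ * β := by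
  obtain ⟨j, hje, hja, hjb⟩ := hA.2.2.2.2.2
  exact (ha (Set.mem_Iic.2 hje) (Set.mem_Iic.2 (jOf_le _)) (le_jOf hje hjb)).trans hja

theorem Set.Finite.setOf_length_le_forall_mem {γ : Type*} {S : Set γ} (hS : S.Finite) (n : ℕ) :
    {l : List γ | l.length ≤ n ∧ ∀ x ∈ l, x ∈ S}.Finite := by
  have := hS.to_subtype
  refine ((List.finite_length_le S n).image (List.map Subtype.val)).subset ?_
  rintro l ⟨hl, hlS⟩
  exact ⟨l.attachWith (· ∈ S) hlS, by simpa using hl, by simp⟩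

@[simp] theorem plen_nil : plen [] = 0 := rfl

@[simp] theorem plen_cons (t : ℕ × ℕ) (P : List (ℕ × ℕ)) : plen (t :: P) = t.2 + plen P := by
  simp [plen]

theorem snd_le_plen {t : ℕ × ℕ} {P : List (ℕ × ℕ)} (ht : t ∈ P) : t.2 ≤ plen P :=
  List.le_sum_of_mem (List.mem_map_of_mem ht)

theorem length_le_plen {P : List (ℕ × ℕ)} (h : ∀ t ∈ P, 1 ≤ t.2) : P.length ≤ plen P := by
  simpa [plen] using
    List.length_le_sum_of_one_le (P.map Prod.snd) (by simpa using fun y x hxy => h (x, y) hxy)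

@[simp] theorem aP_nil : aP (K := K) [] = 1 := rfl

@[simp] theorem aP_cons (t : ℕ × ℕ) (P : List (ℕ × ℕ)) :
    aP (K := K) (t :: P) = X t * aP P := by
  simp [aP]

theorem IsPath.ne_nil {i : ℕ} {P : List (ℕ × ℕ)} (h : IsPath α β e a b i P) : P ≠ [] := by
  induction h <;> simp_all

theorem IsPath.arrow_of_mem {i : ℕ} {P : List (ℕ × ℕ)} (h : IsPath α β e a b i P) :
    ∀ t ∈ P, Arrow α β e a b t.1 t.2 := by
  induction h with
  | single i ℓ hA => simpa using hA
  | prev _ _ _ _ ih => exact ih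
  | cons i ℓ P hA _ _ ih => simpa [hA] using ih

theorem IsPath.one_le_plen {i : ℕ} {P : List (ℕ × ℕ)} (h : IsPath α β e a b i P) :
    1 ≤ plen P := by
  induction h with
  | single i ℓ hA => simpa using hA.one_le
  | prev _ _ _ _ ih => exact ih
  | cons i ℓ P hA _ _ _ =>
    have := hA.one_le
    simp only [plen_cons]
    omega

theorem IsPath.fst_le (hα : 0 < α) (hb : MonotoneOn b (Set.Iic e)) (hb0 : b 0 = 0) {i : ℕ}
    {P : List (ℕ × ℕ)} (h : IsPath α β e a b i P) : ∀ t ∈ P, t.1 ≤ i := by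
  induction h with
  | single i ℓ hA => simp
  | prev i P _ _ ih => exact fun t ht => (ih t ht).trans (Nat.sub_le i 1)
  | cons i ℓ P hA _ _ ih =>
    have := hA.jOf_lt hα hb hb0
    simp only [List.mem_cons, forall_eq_or_imp, le_refl, true_and]
    exact fun t ht => (ih t ht).trans this.le

theorem IsPath.plen_mul_le (hb : MonotoneOn b (Set.Iic e)) (hb0 : b 0 = 0) {i : ℕ}
    {P : List (ℕ × ℕ)} (h : IsPath α β e a b i P) (hie : i ≤ e) : plen P * α ≤ b i := by
  induction h with
  | single i ℓ hA => simpa using hA.mul_le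
  | prev i P _ _ ih =>
    exact (ih (by omega)).trans (hb (Set.mem_Iic.2 (by omega)) (Set.mem_Iic.2 hie) (Nat.sub_le i 1))
  | cons i ℓ P hA _ _ ih =>
    have h1 := ih (jOf_le _)
    have h2 := b_jOf_le hb0 (e := e) (b i - ℓ * α)
    have h3 := hA.mul_le
    simp only [plen_cons, Nat.add_mul]
    omega

theorem setOf_arrow_finite (hα : 0 < α) (i : ℕ) : {ℓ | Arrow α β e a b i ℓ}.Finite :=
  (Set.finite_Iic (b i)).subset fun ℓ hℓ => (Nat.le_mul_of_pos_right ℓ hα).trans hℓ.mul_le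

/-- Paths from `m_i` of length `p`, together with the empty path when `p = 0`: admitting it lets
the leading term `m_i` of `f_i` be counted as the path sum of length `0`. -/
def pathsOfLen (α β e : ℕ) (a b : ℕ → ℕ) (i p : ℕ) : Set (List (ℕ × ℕ)) :=
  {P | (P = [] ∨ IsPath α β e a b i P) ∧ plen P = p}

noncomputable def pathCoeff (K : Type*) [Field K] (α β e : ℕ) (a b : ℕ → ℕ) (i p : ℕ) :
    ArrowRing K :=
  ∑ᶠ P ∈ pathsOfLen α β e a b i p, aP P

theorem pathsOfLen_zero (i : ℕ) : pathsOfLen α β e a b i 0 = {[]} := by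
  ext P
  constructor
  · rintro ⟨rfl | hP, hlen⟩
    · rfl
    · exact absurd hlen (Nat.one_le_iff_ne_zero.1 hP.one_le_plen)
  · rintro rfl
    exact ⟨Or.inl rfl, rfl⟩

theorem pathCoeff_zero (i : ℕ) : pathCoeff K α β e a b i 0 = 1 := by
  rw [pathCoeff, pathsOfLen_zero, finsum_mem_singleton, aP_nil]

theorem pathsOfLen_finite (i p : ℕ) : (pathsOfLen α β e a b i p).Finite := by
  refine ((Set.Iic (e, p)).toFinite.setOf_length_le_forall_mem p).subset ?_
  rintro P ⟨rfl | hP, rfl⟩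
  · simp
  · have harrow := hP.arrow_of_mem
    exact ⟨length_le_plen fun t ht => (harrow t ht).one_le,
      fun t ht => ⟨(harrow t ht).2.1, snd_le_plen ht⟩⟩

theorem pathCoeff_eq_zero (hb : MonotoneOn b (Set.Iic e)) (hb0 : b 0 = 0) {i p : ℕ}
    (hie : i ≤ e) (h : b i < p * α) : pathCoeff K α β e a b i p = 0 := by
  have : pathsOfLen α β e a b i p = ∅ := by
    refine Set.eq_empty_of_forall_notMem ?_
    rintro P ⟨rfl | hP, rfl⟩
    · simp at h
    · exact absurd (hP.plen_mul_le hb hb0 hie) h.not_ge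
  rw [pathCoeff, this, finsum_mem_empty]

theorem pathsTo_eq_pathsOfLen (hβ : 0 < β) {i p : ℕ} (hp : 1 ≤ p) (hpα : p * α ≤ b i) :
    pathsTo α β e a b i (a i + p * β, b i - p * α) = pathsOfLen α β e a b i p := by
  ext P
  constructor
  · rintro ⟨hP, h1, -⟩
    exact ⟨Or.inr hP, Nat.eq_of_mul_eq_mul_right hβ (by omega)⟩
  · rintro ⟨rfl | hP, rfl⟩
    · simp at hp
    · exact ⟨hP, rfl, by omega⟩

/-- The guard `ℓ ≤ p` keeps `p - ℓ` from truncating. -/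
def arrowPathsOfLen (α β e : ℕ) (a b : ℕ → ℕ) (i ℓ p : ℕ) : Set (List (ℕ × ℕ)) :=
  if ℓ ≤ p then List.cons (i, ℓ) '' pathsOfLen α β e a b (jOf e b (b i - ℓ * α)) (p - ℓ) else ∅

theorem arrowPathsOfLen_finite (i ℓ p : ℕ) : (arrowPathsOfLen α β e a b i ℓ p).Finite := by
  unfold arrowPathsOfLen
  split_ifs
  exacts [(pathsOfLen_finite _ _).image _, Set.finite_empty]

theorem head?_eq_of_mem_arrowPathsOfLen {i ℓ p : ℕ} {P : List (ℕ × ℕ)}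
    (h : P ∈ arrowPathsOfLen α β e a b i ℓ p) : P.head? = some (i, ℓ) := by
  unfold arrowPathsOfLen at h
  split_ifs at h
  · obtain ⟨P, -, rfl⟩ := h
    rfl
  · exact h.elim

theorem finsum_arrowPathsOfLen (i ℓ p : ℕ) :
    ∑ᶠ P ∈ arrowPathsOfLen α β e a b i ℓ p, aP P = if ℓ ≤ p then
      X (i, ℓ) * pathCoeff K α β e a b (jOf e b (b i - ℓ * α)) (p - ℓ) else 0 := by
  unfold arrowPathsOfLen
  split_ifs
  · rw [finsum_mem_image List.cons_injective.injOn, pathCoeff, mul_finsum_mem]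
    simp only [aP_cons]
  · exact finsum_mem_empty

theorem pathsOfLen_eq_union {i : ℕ} (p : ℕ) (hi : 1 ≤ i) :
    pathsOfLen α β e a b i p = pathsOfLen α β e a b (i - 1) p ∪
      ⋃ ℓ ∈ {ℓ | Arrow α β e a b i ℓ}, arrowPathsOfLen α β e a b i ℓ p := by
  ext P
  simp only [arrowPathsOfLen, Set.mem_union, Set.mem_iUnion, Set.mem_ofPred_eq]
  constructor
  · rintro ⟨rfl | hP, hlen⟩
    · exact Or.inl ⟨Or.inl rfl, hlen⟩
    cases hP with
    | single _ ℓ hA =>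
      simp only [plen_cons, plen_nil, add_zero] at hlen
      refine Or.inr ⟨ℓ, hA, ?_⟩
      rw [if_pos hlen.le]
      exact ⟨[], ⟨Or.inl rfl, by simp [hlen]⟩, rfl⟩
    | prev _ _ _ hP => exact Or.inl ⟨Or.inr hP, hlen⟩
    | cons _ ℓ P hA _ hP =>
      simp only [plen_cons] at hlen
      refine Or.inr ⟨ℓ, hA, ?_⟩
      rw [if_pos (by omega)]
      exact ⟨P, ⟨Or.inr hP, by omega⟩, rfl⟩
  · rintro (⟨rfl | hP, hlen⟩ | ⟨ℓ, hA, hP⟩)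
    · exact ⟨Or.inl rfl, hlen⟩
    · exact ⟨Or.inr (.prev i P hi hP), hlen⟩
    split_ifs at hP with hℓ
    · obtain ⟨P, ⟨rfl | hP, hlen⟩, rfl⟩ := hP
      · exact ⟨Or.inr (.single i ℓ hA), by simp at hlen ⊢; omega⟩
      · exact ⟨Or.inr (.cons i ℓ P hA hP.ne_nil hP), by simp only [plen_cons]; omega⟩
    · exact hP.elim

theorem pathCoeff_eq_add (hα : 0 < α) (hb : MonotoneOn b (Set.Iic e)) (hb0 : b 0 = 0) {i : ℕ}
    (p : ℕ) (hi : 1 ≤ i) :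
    pathCoeff K α β e a b i p = pathCoeff K α β e a b (i - 1) p +
      ∑ᶠ ℓ ∈ {ℓ | Arrow α β e a b i ℓ}, if ℓ ≤ p then
        X (i, ℓ) * pathCoeff K α β e a b (jOf e b (b i - ℓ * α)) (p - ℓ) else 0 := by
  have hdisj : Disjoint (pathsOfLen α β e a b (i - 1) p)
      (⋃ ℓ ∈ {ℓ | Arrow α β e a b i ℓ}, arrowPathsOfLen α β e a b i ℓ p) := by
    refine Set.disjoint_left.2 fun P hP hcone => ?_
    obtain ⟨ℓ, -, hℓ⟩ := Set.mem_iUnion₂.1 hcone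
    have hhead := head?_eq_of_mem_arrowPathsOfLen hℓ
    obtain ⟨rfl | hP, -⟩ := hP
    · simp at hhead
    · obtain ⟨t, P', rfl⟩ := List.exists_cons_of_ne_nil hP.ne_nil
      have := hP.fst_le hα hb hb0 t List.mem_cons_self
      simp only [List.head?_cons, Option.some.injEq] at hhead
      subst hhead
      simp only at this
      omega
  have hpair : {ℓ | Arrow α β e a b i ℓ}.PairwiseDisjoint (arrowPathsOfLen α β e a b i · p) :=
    fun ℓ _ ℓ' _ hne => Set.disjoint_left.2 fun P h h' => hne <| by
      simpa using (head?_eq_of_mem_arrowPathsOfLen h).symm.trans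
        (head?_eq_of_mem_arrowPathsOfLen h')
  rw [pathCoeff, pathsOfLen_eq_union p hi, finsum_mem_union hdisj (pathsOfLen_finite _ _)
    ((setOf_arrow_finite hα i).biUnion fun ℓ _ => arrowPathsOfLen_finite i ℓ p),
    finsum_mem_biUnion hpair (setOf_arrow_finite hα i) fun ℓ _ => arrowPathsOfLen_finite i ℓ p]
  simp only [finsum_arrowPathsOfLen, pathCoeff]

theorem xymon_mul_xymon (m n : ℕ × ℕ) (c d : ArrowRing K) :
    xymon m c * xymon n d = xymon (m + n) (c * d) :=
  AddMonoidAlgebra.single_mul_single ..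

@[simp] theorem xymon_zero (m : ℕ × ℕ) : xymon m (0 : ArrowRing K) = 0 :=
  AddMonoidAlgebra.single_zero m

theorem xymon_add (m : ℕ × ℕ) (c d : ArrowRing K) :
    xymon m (c + d) = xymon m c + xymon m d :=
  AddMonoidAlgebra.single_add m c d

theorem xymon_sum {ι : Type*} (m : ℕ × ℕ) (s : Finset ι) (g : ι → ArrowRing K) :
    xymon m (∑ x ∈ s, g x) = ∑ x ∈ s, xymon m (g x) :=
  map_sum (AddMonoidAlgebra.singleAddHom m) g s

/-- `G_i`. The terms with `b i < p * α`, where `b i - p * α` truncates, have coefficient zero. -/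
noncomputable def evainPoly (K : Type*) [Field K] (α β e : ℕ) (a b : ℕ → ℕ) (i : ℕ) : XYRing K :=
  ∑ p ∈ Finset.range (b i + 1), xymon (a i + p * β, b i - p * α) (pathCoeff K α β e a b i p)

/-- `hx` and `hy` say that `s · m_j = x^u y^v r^ℓ`, written without truncated subtraction. -/
theorem xymon_mul_evainPoly (hα : 0 < α) (hb : MonotoneOn b (Set.Iic e)) (hb0 : b 0 = 0)
    {j ℓ u v : ℕ} (s : ℕ × ℕ) (c : ArrowRing K) (hj : j ≤ e) (hx : s.1 + a j = u + ℓ * β)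
    (hy : s.2 + b j + ℓ * α = v) :
    xymon s c * evainPoly K α β e a b j = ∑ p ∈ Finset.range (v + 1),
      xymon (u + p * β, v - p * α) (if ℓ ≤ p then c * pathCoeff K α β e a b j (p - ℓ) else 0) := by
  have hℓ : ℓ ≤ ℓ * α := Nat.le_mul_of_pos_right ℓ hα
  have hterm : ∀ q, xymon s c * xymon (a j + q * β, b j - q * α) (pathCoeff K α β e a b j q) =
      xymon (u + (ℓ + q) * β, v - (ℓ + q) * α) (c * pathCoeff K α β e a b j q) := fun q => by
    by_cases hq : q * α ≤ b j
    · rw [xymon_mul_xymon]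
      congr 1
      ext <;> simp only [Prod.fst_add, Prod.snd_add, Nat.add_mul] <;> omega
    · rw [pathCoeff_eq_zero hb hb0 hj (not_le.1 hq)]
      simp
  have hrange : v + 1 = ℓ + (v + 1 - ℓ) := by omega
  simp only [apply_ite (xymon _), xymon_zero]
  rw [evainPoly, Finset.mul_sum, hrange, Finset.sum_range_add _ ℓ,
    Finset.sum_eq_zero fun p hp => if_neg (by simpa using hp), zero_add]
  simp only [Nat.le_add_right, if_true, Nat.add_sub_cancel_left, ← hterm]
  refine Finset.sum_subset (Finset.range_subset_range.2 (by omega)) fun q _ hq => ?_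
  have hq : b j < q * α := by
    simp only [Finset.mem_range, not_lt] at hq
    exact lt_of_lt_of_le hq (Nat.le_mul_of_pos_right q hα)
  rw [pathCoeff_eq_zero hb hb0 hj hq, xymon_zero, mul_zero]

theorem evainRec_evainPoly (hα : 0 < α) (ha : AntitoneOn a (Set.Iic e))
    (hb : MonotoneOn b (Set.Iic e)) (hb0 : b 0 = 0) :
    EvainRec α β e a b (evainPoly K α β e a b) := by
  refine ⟨by simp [evainPoly, hb0, pathCoeff_zero], fun i hi hie => ?_⟩
  have hpred : i - 1 ∈ Set.Iic e := Set.mem_Iic.2 (by omega)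
  have hai := ha hpred (Set.mem_Iic.2 hie) (Nat.sub_le i 1)
  have hbi := hb hpred (Set.mem_Iic.2 hie) (Nat.sub_le i 1)
  rw [xymon_mul_evainPoly (u := a (i - 1)) (v := b i) (ℓ := 0) hα hb hb0 _ _ hie
      (by simp only; omega) (by simp),
    xymon_mul_evainPoly (u := a (i - 1)) (v := b i) (ℓ := 0) hα hb hb0 _ _ hpred
      (by simp) (by simp only; omega),
    finsum_mem_congr rfl fun ℓ hA =>
      xymon_mul_evainPoly (u := a (i - 1)) (v := b i) (ℓ := ℓ) hα hb hb0 _ _ (jOf_le _)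
        (by simp only; have := Arrow.a_jOf_le ha hA; omega)
        (by simp only; have := b_jOf_le hb0 (e := e) (b i - ℓ * α); have := Arrow.mul_le hA; omega),
    finsum_mem_eq_finite_toFinset_sum _ (setOf_arrow_finite hα i), Finset.sum_comm,
    ← Finset.sum_add_distrib]
  refine Finset.sum_congr rfl fun p _ => ?_
  simp only [zero_le, if_true, one_mul, Nat.sub_zero]
  rw [← xymon_sum, ← xymon_add, ← finsum_mem_eq_finite_toFinset_sum,
    pathCoeff_eq_add hα hb hb0 p hi]

/-- The factor `m_{i-1}/m_i` in front of `f_i` is cancellable, and the other terms involve only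
`f_j` with `j < i`. -/
theorem EvainRec.eq (hα : 0 < α) (hb : MonotoneOn b (Set.Iic e)) (hb0 : b 0 = 0)
    {F G : ℕ → XYRing K} (hF : EvainRec α β e a b F) (hG : EvainRec α β e a b G) :
    ∀ i ≤ e, F i = G i := by
  intro i
  induction i using Nat.strong_induction_on with
  | _ i ih =>
    intro hie
    rcases Nat.eq_zero_or_pos i with rfl | hi
    · rw [hF.1, hG.1]
    have hrec := hF.2 i hi hie
    rw [ih (i - 1) (by omega) (by omega),
      finsum_mem_congr rfl fun ℓ hA => by
        have hj := Arrow.jOf_lt hα hb hb0 hA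
        rw [ih _ hj (hj.le.trans hie)],
      ← hG.2 i hi hie] at hrec
    exact mul_left_cancel₀ (by simp [xymon]) hrec

/-- By coprimality, the exponents of a monomial of degree `deg m_i` differ from those of `m_i` by a
multiple of `(β, -α)`. -/
theorem msetLt_eq_image (hα : 0 < α) (hβ : 0 < β) (hco : Nat.Coprime α β) (i : ℕ) :
    MsetLt α β a b i = (fun p => (a i + p * β, b i - p * α)) '' {p | 1 ≤ p ∧ p * α ≤ b i} := by
  ext ⟨m₁, m₂⟩
  simp only [MsetLt, LexLt, Set.mem_ofPred_eq, Set.mem_image, Prod.mk.injEq]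
  constructor
  · rintro ⟨hlt | ⟨rfl, hlt⟩, hdeg⟩
    · obtain ⟨d, hd⟩ := Nat.exists_eq_add_of_lt hlt
      have hk : α * a i < α * m₁ := by nlinarith
      obtain ⟨k, rfl⟩ := Nat.exists_eq_add_of_le (Nat.lt_of_mul_lt_mul_left hk).le
      have hkd : α * k = β * (d + 1) := by rw [hd] at hdeg; linarith
      obtain ⟨p, hp⟩ := hco.dvd_of_dvd_mul_left (Dvd.intro k hkd)
      have hkp : k = p * β := by
        apply Nat.eq_of_mul_eq_mul_left hα
        rw [hkd, hp]
        ring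
      subst hkp
      refine ⟨p, ⟨?_, ?_⟩, rfl, ?_⟩
      · exact Nat.one_le_iff_ne_zero.2 (by rintro rfl; simp at hp)
      · rw [mul_comm, ← hp, hd]
        omega
      · rw [mul_comm, ← hp, hd]
        omega
    · have : α * m₁ = α * a i := by linarith
      exact absurd (Nat.eq_of_mul_eq_mul_left hα this) hlt.ne
  · rintro ⟨p, ⟨hp, hpα⟩, rfl, rfl⟩
    obtain ⟨c, hc⟩ := Nat.exists_eq_add_of_le hpα
    refine ⟨Or.inl (by have := Nat.mul_pos hp hα; omega), ?_⟩
    rw [hc, Nat.add_sub_cancel_left]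
    ring

theorem closedForm_eq_evainPoly (hα : 0 < α) (hβ : 0 < β) (hco : Nat.Coprime α β)
    (hb : MonotoneOn b (Set.Iic e)) (hb0 : b 0 = 0) {i : ℕ} (hie : i ≤ e) :
    xymon (a i, b i) 1 + ∑ᶠ m ∈ MsetLt α β a b i,
      xymon m (∑ᶠ P ∈ pathsTo α β e a b i m, aP (K := K) P) = evainPoly K α β e a b i := by
  have hinj : Set.InjOn (fun p => (a i + p * β, b i - p * α)) {p | 1 ≤ p ∧ p * α ≤ b i} :=
    fun p _ q _ h => Nat.eq_of_mul_eq_mul_right hβ (by simpa using congrArg Prod.fst h)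
  rw [evainPoly, ← Finset.add_sum_erase _ _ (Finset.mem_range.2 (Nat.succ_pos _)),
    pathCoeff_zero, msetLt_eq_image hα hβ hco, finsum_mem_image hinj,
    finsum_mem_congr rfl fun p hp => by rw [pathsTo_eq_pathsOfLen hβ hp.1 hp.2, ← pathCoeff],
    ← finsum_mem_coe_finset]
  simp only [zero_mul, add_zero, Nat.sub_zero]
  congr 1
  refine finsum_mem_inter_support_eq' _ _ _ fun p hp => ?_
  have hpα : p * α ≤ b i := by
    by_contra! h
    exact hp (by simp only [pathCoeff_eq_zero hb hb0 hie h, xymon_zero])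
  have := Nat.le_mul_of_pos_right p hα
  simp only [Set.mem_ofPred_eq, Finset.coe_erase, Finset.coe_range, Set.mem_sdiff, Set.mem_Iio,
    Set.mem_singleton_iff]
  omega

end

/-- (Lemma 3.11.)  Evain's polynomials satisfy
`f_i = m_i + Σ_{m ∈ M_i} ( Σ_{P path from m_i to m} a_P ) m`. -/
theorem evain_closed_form {K : Type*} [Field K] (α β e : ℕ) (a b : ℕ → ℕ)
    (hdata : MonIdealData α β e a b)
    (F : ℕ → XYRing K) (hF : EvainRec α β e a b F) :
    ∀ i ≤ e, F i = xymon (a i, b i) 1 +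
      ∑ᶠ m ∈ MsetLt α β a b i,
        xymon m (∑ᶠ P ∈ pathsTo α β e a b i m, aP P) := by
  obtain ⟨hα, hβ, hco, ha, hb, hb0, -⟩ := hdata
  have ha' : AntitoneOn a (Set.Iic e) := (strictAntiOn_Iic_of_succ_lt ha).antitoneOn
  have hb' : MonotoneOn b (Set.Iic e) := (strictMonoOn_Iic_of_lt_succ hb).monotoneOn
  intro i hie
  rw [hF.eq hα hb' hb0 (evainRec_evainPoly hα ha' hb' hb0) i hie,
    closedForm_eq_evainPoly hα hβ hco hb' hb0 hie]
end

section
/- Let K be a field and let a, b, c, d ∈ K. The ideals ⟨y² + axy + bx², x⁵⟩ and ⟨y⁵, x² + cxy + dy²⟩ of the polynomial ring K[x,y] are equal if and only if a⁴ − 3a²b + b² = 0, c = ad, and bd = 1. -/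
/-!
Since `y² + axy + bx²` is monic in `y`, the ring `K[x,y]/⟨y² + axy + bx², x⁵⟩` is free over
`K[x]/(x⁵)` on `1, y`. There `x² + cxy + dy² = (1 - bd) x² + (c - ad) xy`, and reducing `y⁵` with
`y² = -axy - bx²` leaves `(a⁴ − 3a²b + b²) x⁴y`; so these two elements lie in the first ideal
exactly when `bd = 1, c = ad`, resp. `a⁴ − 3a²b + b² = 0`. Conversely, if `bd = 1` and `c = ad`
the two quadrics are proportional, and the same reduction of `y⁵`, and its mirror image for `x⁵`,
shows that each ideal contains the other's fifth power.
-/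

namespace AdjoinRoot

open _root_.Polynomial

variable {R : Type*} [CommRing R]

theorem of_mul_root_X_pow_pow_eq_zero_iff [Nontrivial R] {n k : ℕ} (hk : k < n) (c : R) :
    of (X ^ n) c * root (X ^ n : R[X]) ^ k = 0 ↔ c = 0 := by
  refine ⟨fun h => by_contra fun hc => mk_ne_zero_of_natDegree_lt (monic_X_pow n)
    (g := C c * X ^ k) (by rwa [C_mul_X_pow_eq_monomial, Ne, monomial_eq_zero_iff]) ?_ ?_,
    fun h => by simp [h]⟩
  · rwa [natDegree_C_mul_X_pow k c hc, natDegree_X_pow]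
  · rw [map_mul, map_pow, mk_C, mk_X]; exact h

theorem of_add_of_mul_root_eq_zero_iff {F : R[X]} (hF : F.Monic) (hdeg : 1 < F.natDegree)
    (α β : R) : of F α + of F β * root F = 0 ↔ α = 0 ∧ β = 0 := by
  refine ⟨fun h => ?_, fun ⟨hα, hβ⟩ => by simp [hα, hβ]⟩
  have hlin : C β * X + C α = 0 := by
    by_contra hne
    refine mk_ne_zero_of_natDegree_lt hF hne (natDegree_linear_le.trans_lt hdeg) ?_
    rw [map_add, map_mul, mk_C, mk_C, mk_X, add_comm]; exact h
  exact ⟨by simpa using congrArg (coeff · 0) hlin, by simpa using congrArg (coeff · 1) hlin⟩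

end AdjoinRoot

theorem pow_five_eq_mul_quadratic_add {S : Type*} [CommRing S] (a b x y : S) :
    y ^ 5 = (y ^ 3 - a * x * y ^ 2 + (a ^ 2 - b) * x ^ 2 * y + (2 * a * b - a ^ 3) * x ^ 3)
        * (y ^ 2 + a * x * y + b * x ^ 2)
      + (a ^ 4 - 3 * a ^ 2 * b + b ^ 2) * x ^ 4 * y + (a ^ 3 * b - 2 * a * b ^ 2) * x ^ 5 := by
  ring

theorem pow_five_mem_span_quadratic {R S : Type*} [CommRing R] [CommRing S] [Algebra R S]
    {a b : R} (h : a ^ 4 - 3 * a ^ 2 * b + b ^ 2 = 0) (x y : S) :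
    y ^ 5 ∈ Ideal.span {y ^ 2 + algebraMap R S a * x * y + algebraMap R S b * x ^ 2, x ^ 5} := by
  have h' : (algebraMap R S a) ^ 4 - 3 * (algebraMap R S a) ^ 2 * algebraMap R S b
      + (algebraMap R S b) ^ 2 = 0 := by
    simpa only [map_add, map_sub, map_mul, map_pow, map_ofNat, map_zero]
      using congrArg (algebraMap R S) h
  rw [pow_five_eq_mul_quadratic_add (algebraMap R S a) (algebraMap R S b) x y, h', zero_mul,
    zero_mul, add_zero]
  exact Ideal.add_mem _ (Ideal.mul_mem_left _ _ (Ideal.subset_span (by simp)))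
    (Ideal.mul_mem_left _ _ (Ideal.subset_span (by simp)))

namespace EdgeScheme

section Model

open Polynomial

variable {K : Type*} [Field K]

abbrev Truncated (K : Type*) [Field K] : Type _ := AdjoinRoot (X ^ 5 : K[X])

instance : Nontrivial (Truncated K) := AdjoinRoot.nontrivial _ (by simp)

noncomputable def Truncated.x : Truncated K := AdjoinRoot.root _

noncomputable def modelQuadratic (a b : K) : (Truncated K)[X] :=
  X ^ 2 + C (algebraMap K _ a * Truncated.x) * X + C (algebraMap K _ b * Truncated.x ^ 2)

theorem modelQuadratic_monic (a b : K) : (modelQuadratic a b).Monic := by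
  unfold modelQuadratic; monicity!

theorem modelQuadratic_natDegree (a b : K) : (modelQuadratic a b).natDegree = 2 := by
  unfold modelQuadratic; compute_degree!

/-- `K[x,y]/⟨y² + axy + bx², x⁵⟩`, presented as `(K[x]/(x⁵))[y]/(y² + axy + bx²)`. -/
abbrev Model (a b : K) : Type _ := AdjoinRoot (modelQuadratic a b)

noncomputable def Model.x (a b : K) : Model a b := algebraMap (Truncated K) _ Truncated.x

noncomputable def Model.y (a b : K) : Model a b := AdjoinRoot.root _

theorem Model.y_sq (a b : K) :
    Model.y a b ^ 2 + algebraMap K _ a * Model.x a b * Model.y a b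
      + algebraMap K _ b * Model.x a b ^ 2 = 0 := by
  have h : aeval (Model.y a b) (modelQuadratic a b) = 0 := by
    rw [Model.y, AdjoinRoot.aeval_eq, AdjoinRoot.mk_self]
  simp only [modelQuadratic, map_add, map_pow, aeval_X, aeval_C, map_mul,
    ← IsScalarTower.algebraMap_apply] at h
  rw [Model.x]
  linear_combination h

theorem Model.x_pow_five (a b : K) : Model.x a b ^ 5 = 0 := by
  rw [Model.x, Truncated.x, ← map_pow, ← AdjoinRoot.mk_X, ← map_pow, AdjoinRoot.mk_self, map_zero]

theorem Truncated.algebraMap_mul_x_pow_eq_zero_iff {k : ℕ} (hk : k < 5) (c : K) :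
    algebraMap K (Truncated K) c * Truncated.x ^ k = 0 ↔ c = 0 :=
  AdjoinRoot.of_mul_root_X_pow_pow_eq_zero_iff hk c

theorem Model.eq_zero_of_add_mul_y_eq_zero {a b α β : K} {k l : ℕ} (hk : k < 5) (hl : l < 5)
    (h : algebraMap K _ α * Model.x a b ^ k
      + algebraMap K _ β * Model.x a b ^ l * Model.y a b = 0) :
    α = 0 ∧ β = 0 := by
  rwa [Model.x, Model.y, IsScalarTower.algebraMap_apply K (Truncated K) (Model a b),
    IsScalarTower.algebraMap_apply K (Truncated K) (Model a b), ← map_pow, ← map_mul, ← map_pow,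
    ← map_mul, AdjoinRoot.algebraMap_eq, AdjoinRoot.of_add_of_mul_root_eq_zero_iff
      (modelQuadratic_monic a b) (by rw [modelQuadratic_natDegree]; norm_num),
    Truncated.algebraMap_mul_x_pow_eq_zero_iff hk,
    Truncated.algebraMap_mul_x_pow_eq_zero_iff hl] at h

end Model

end EdgeScheme

open MvPolynomial

namespace EdgeScheme

variable {K : Type*} [Field K]

noncomputable def toModel (a b : K) : MvPolynomial (Fin 2) K →ₐ[K] Model a b :=
  aeval ![Model.x a b, Model.y a b]

theorem span_le_ker_toModel (a b : K) :
    Ideal.span {X 1 ^ 2 + C a * X 0 * X 1 + C b * X 0 ^ 2, X 0 ^ 5} ≤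
      RingHom.ker (toModel a b) := by
  rw [Ideal.span_le, Set.insert_subset_iff, Set.singleton_subset_iff]
  simp [toModel, ← algebraMap_eq, Model.y_sq, Model.x_pow_five]

theorem toModel_quadratic (a b c d : K) :
    toModel a b (X 0 ^ 2 + C c * X 0 * X 1 + C d * X 1 ^ 2) =
      algebraMap K _ (1 - b * d) * Model.x a b ^ 2
        + algebraMap K _ (c - a * d) * Model.x a b ^ 1 * Model.y a b := by
  simp only [toModel, map_add, map_mul, map_pow, aeval_X, aeval_C, map_sub, map_one,
    Matrix.cons_val_zero, Matrix.cons_val_one, Matrix.cons_val_fin_one, pow_one]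
  linear_combination algebraMap K _ d * Model.y_sq a b

theorem toModel_X_one_pow_five (a b : K) :
    toModel a b (X 1 ^ 5) =
      algebraMap K _ (a ^ 4 - 3 * a ^ 2 * b + b ^ 2) * Model.x a b ^ 4 * Model.y a b := by
  simp only [toModel, map_pow, aeval_X, Matrix.cons_val_one, Matrix.cons_val_fin_one, map_add,
    map_sub, map_mul, map_ofNat]
  rw [pow_five_eq_mul_quadratic_add (algebraMap K _ a) (algebraMap K _ b), Model.y_sq,
    Model.x_pow_five]
  ring

theorem eq_mul_and_mul_eq_one_of_mem_span {a b c d : K}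
    (h : X 0 ^ 2 + C c * X 0 * X 1 + C d * X 1 ^ 2 ∈
      Ideal.span ({X 1 ^ 2 + C a * X 0 * X 1 + C b * X 0 ^ 2, X 0 ^ 5} :
        Set (MvPolynomial (Fin 2) K))) :
    c = a * d ∧ b * d = 1 := by
  have h0 := span_le_ker_toModel a b h
  rw [RingHom.mem_ker, toModel_quadratic] at h0
  obtain ⟨hbd, hcd⟩ := Model.eq_zero_of_add_mul_y_eq_zero (by norm_num) (by norm_num) h0
  exact ⟨by linear_combination hcd, by linear_combination -hbd⟩

theorem quartic_eq_zero_of_X_one_pow_five_mem_span {a b : K}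
    (h : X 1 ^ 5 ∈ Ideal.span ({X 1 ^ 2 + C a * X 0 * X 1 + C b * X 0 ^ 2, X 0 ^ 5} :
      Set (MvPolynomial (Fin 2) K))) :
    a ^ 4 - 3 * a ^ 2 * b + b ^ 2 = 0 := by
  have h0 := span_le_ker_toModel a b h
  rw [RingHom.mem_ker, toModel_X_one_pow_five] at h0
  exact (Model.eq_zero_of_add_mul_y_eq_zero (α := 0) (k := 0) (l := 4) (by norm_num) (by norm_num)
    (by rwa [map_zero, zero_mul, zero_add])).2

theorem span_eq_of_quartic_eq_zero {a b c d : K} (hq : a ^ 4 - 3 * a ^ 2 * b + b ^ 2 = 0)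
    (hc : c = a * d) (hbd : b * d = 1) :
    Ideal.span ({X 1 ^ 2 + C a * X 0 * X 1 + C b * X 0 ^ 2, X 0 ^ 5} :
        Set (MvPolynomial (Fin 2) K)) =
      Ideal.span {X 1 ^ 5, X 0 ^ 2 + C c * X 0 * X 1 + C d * X 1 ^ 2} := by
  set f : MvPolynomial (Fin 2) K := X 1 ^ 2 + C a * X 0 * X 1 + C b * X 0 ^ 2 with hf_def
  set g : MvPolynomial (Fin 2) K := X 0 ^ 2 + C c * X 0 * X 1 + C d * X 1 ^ 2 with hg_def
  have hbdC : C b * C d = (1 : MvPolynomial (Fin 2) K) := by rw [← map_mul, hbd, map_one]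
  have hg : g = C d * f := by
    rw [hf_def, hg_def, hc, map_mul]; linear_combination (-X 0 ^ 2) * hbdC
  have hf : f = C b * g := by
    rw [hf_def, hg_def, hc, map_mul]; linear_combination (-(X 1 ^ 2 + C a * X 0 * X 1)) * hbdC
  have hq' : c ^ 4 - 3 * c ^ 2 * d + d ^ 2 = 0 := by
    rw [hc]; linear_combination d ^ 4 * hq + (3 * a ^ 2 * d ^ 3 - b * d ^ 3 - d ^ 2) * hbd
  apply le_antisymm <;> rw [Ideal.span_le, Set.insert_subset_iff, Set.singleton_subset_iff]
  · refine ⟨hf ▸ Ideal.mul_mem_left _ _ (Ideal.subset_span (by simp)), ?_⟩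
    have hx := pow_five_mem_span_quadratic hq' (X 1) (X 0 : MvPolynomial (Fin 2) K)
    rwa [algebraMap_eq, mul_right_comm _ (X 1), Set.pair_comm] at hx
  · refine ⟨?_, hg ▸ Ideal.mul_mem_left _ _ (Ideal.subset_span (by simp))⟩
    have hy := pow_five_mem_span_quadratic hq (X 0) (X 1 : MvPolynomial (Fin 2) K)
    rwa [algebraMap_eq] at hy

end EdgeScheme

open EdgeScheme

/-- For a field `K` and `a, b, c, d ∈ K`, the ideals
`⟨y² + axy + bx², x⁵⟩` and `⟨y⁵, x² + cxy + dy²⟩` of `K[x,y]` coincide if and only if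
`a⁴ − 3a²b + b² = 0`, `c = ad` and `bd = 1`.  (Here `x = X 0`, `y = X 1`.) -/
theorem edge_scheme_equations {K : Type*} [Field K] (a b c d : K) :
    Ideal.span ({(X 1) ^ 2 + C a * X 0 * X 1 + C b * (X 0) ^ 2, (X 0) ^ 5} :
        Set (MvPolynomial (Fin 2) K)) =
      Ideal.span ({(X 1) ^ 5, (X 0) ^ 2 + C c * X 0 * X 1 + C d * (X 1) ^ 2} :
        Set (MvPolynomial (Fin 2) K)) ↔
    (a ^ 4 - 3 * a ^ 2 * b + b ^ 2 = 0 ∧ c = a * d ∧ b * d = 1) := by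
  refine ⟨fun h => ?_, fun ⟨hq, hc, hbd⟩ => span_eq_of_quartic_eq_zero hq hc hbd⟩
  have hg : X 0 ^ 2 + C c * X 0 * X 1 + C d * X 1 ^ 2 ∈
      Ideal.span ({X 1 ^ 2 + C a * X 0 * X 1 + C b * X 0 ^ 2, X 0 ^ 5} :
        Set (MvPolynomial (Fin 2) K)) := h ▸ Ideal.subset_span (by simp)
  have hy : X 1 ^ 5 ∈ Ideal.span ({X 1 ^ 2 + C a * X 0 * X 1 + C b * X 0 ^ 2, X 0 ^ 5} :
      Set (MvPolynomial (Fin 2) K)) := h ▸ Ideal.subset_span (by simp)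
  exact ⟨quartic_eq_zero_of_X_one_pow_five_mem_span hy, eq_mul_and_mul_eq_one_of_mem_span hg⟩
end

section
/- Grade K[x,y] over a field K by ℤ²/ℤ(1,−1), i.e. deg(x) = deg(y) = 1, and let ≺ be the lexicographic term order with x ≺ y. Then: (a) for M = ⟨x⁵, x³y², y⁴⟩ and N = ⟨x⁴, x³y³, xy⁴, y⁵⟩, the map f : Mon(M) → Mon(N) defined by f(y⁴) = x⁴, f(x³y²) = x⁴y, and f(m) = m for all other m ∈ Mon(M), is an arrow map with respect to this grading and ≺; (b) for the colon ideals (Q : M) = ⟨x⁵, x²y, y³⟩ and (Q : N) = ⟨x⁴, x²y, xy², y⁵⟩, where Q = ⟨x⁵, y⁵⟩, there is no arrow map g : Mon((Q : M)) → Mon((Q : N)) with respect to this grading and ≺. -/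
open MvPolynomial

/-- A term order on the monomial exponents of `K[x₁,…,xₙ]`: a strict total order on
`Fin n →₀ ℕ` with `0` smallest and compatible with addition. -/
def IsTermOrder (n : ℕ) (lt : (Fin n →₀ ℕ) → (Fin n →₀ ℕ) → Prop) : Prop :=
  (∀ u v : Fin n →₀ ℕ, lt u v ∨ u = v ∨ lt v u) ∧
  (∀ u v w : Fin n →₀ ℕ, lt u v → lt v w → lt u w) ∧
  (∀ u : Fin n →₀ ℕ, ¬ lt u u) ∧
  (∀ u : Fin n →₀ ℕ, u ≠ 0 → lt 0 u) ∧
  (∀ u v w : Fin n →₀ ℕ, lt u v → lt (u + w) (v + w))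

/-- `u` is the exponent of the `lt`-leading monomial `in_≺(f)` of `f`. -/
def IsLeadExp {n : ℕ} {K : Type*} [Field K] (lt : (Fin n →₀ ℕ) → (Fin n →₀ ℕ) → Prop)
    (f : MvPolynomial (Fin n) K) (u : Fin n →₀ ℕ) : Prop :=
  u ∈ f.support ∧ ∀ v ∈ f.support, v ≠ u → lt v u

/-- The initial ideal `in_≺(I)`, generated by the leading monomials of nonzero elements. -/
noncomputable def initialIdeal {n : ℕ} {K : Type*} [Field K]
    (lt : (Fin n →₀ ℕ) → (Fin n →₀ ℕ) → Prop) (I : Ideal (MvPolynomial (Fin n) K)) :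
    Ideal (MvPolynomial (Fin n) K) :=
  Ideal.span { p | ∃ f ∈ I, ∃ u, IsLeadExp lt f u ∧ p = monomial u 1 }

/-- `DistRel c u v ℓ` says that `u - v = ℓ·c` in `ℤⁿ`; then `d(x^u, x^v) = |ℓ|`. -/
def DistRel {n : ℕ} (c : Fin n → ℤ) (u v : Fin n →₀ ℕ) (ℓ : ℤ) : Prop :=
  ∀ i, (u i : ℤ) - (v i : ℤ) = ℓ * c i

/-- Two monomials have the same degree in the `ℤⁿ/ℤc`-grading iff `u - v ∈ ℤc`. -/
def SameDeg {n : ℕ} (c : Fin n → ℤ) (u v : Fin n →₀ ℕ) : Prop :=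
  ∃ ℓ : ℤ, DistRel c u v ℓ

/-- A polynomial is homogeneous for the `ℤⁿ/ℤc`-grading if all of its monomials
have the same degree. -/
def CHom {n : ℕ} {K : Type*} [Field K] (c : Fin n → ℤ) (f : MvPolynomial (Fin n) K) : Prop :=
  ∀ u ∈ f.support, ∀ v ∈ f.support, SameDeg c u v

/-- An ideal is homogeneous for the `ℤⁿ/ℤc`-grading if it is generated by homogeneous
elements. -/
def CHomIdeal {n : ℕ} {K : Type*} [Field K] (c : Fin n → ℤ)
    (I : Ideal (MvPolynomial (Fin n) K)) : Prop :=
  ∃ G : Set (MvPolynomial (Fin n) K), (∀ g ∈ G, CHom c g) ∧ I = Ideal.span G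

/-- The exponent vector `c⁺` of a vector `c ∈ ℤⁿ`. -/
noncomputable def cpos {n : ℕ} (c : Fin n → ℤ) : Fin n →₀ ℕ :=
  Finsupp.equivFunOnFinite.symm fun i => (c i).toNat

/-- The exponent vector `c⁻` of a vector `c ∈ ℤⁿ`. -/
noncomputable def cneg {n : ℕ} (c : Fin n → ℤ) : Fin n →₀ ℕ :=
  Finsupp.equivFunOnFinite.symm fun i => (-(c i)).toNat

/-- `Mon M`: the set of (exponents of) monomials lying in `M`. -/
def Mon {n : ℕ} {K : Type*} [Field K] (M : Ideal (MvPolynomial (Fin n) K)) :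
    Set (Fin n →₀ ℕ) :=
  { u | monomial u 1 ∈ M }

/-- `f` (as a map on exponent vectors) restricts to an arrow map `Mon M → Mon N`
with respect to the `ℤⁿ/ℤc`-grading and the term order `lt`:
(1) it is a degree-preserving bijection with `m ⪰ f(m)`;
(2) `d(m', f(m')) ≤ d(m, f(m))` for every multiple `m'` of `m ∈ Mon M`;
(3) `d(f⁻¹(m'), m') ≤ d(f⁻¹(m), m)` for every `m ∈ Mon N` and multiple `m'` of `m`. -/
def IsArrowMap {n : ℕ} {K : Type*} [Field K] (c : Fin n → ℤ)
    (lt : (Fin n →₀ ℕ) → (Fin n →₀ ℕ) → Prop)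
    (M N : Ideal (MvPolynomial (Fin n) K)) (f : (Fin n →₀ ℕ) → (Fin n →₀ ℕ)) : Prop :=
  Set.BijOn f (Mon M) (Mon N) ∧
  (∀ u ∈ Mon M, SameDeg c u (f u)) ∧
  (∀ u ∈ Mon M, f u = u ∨ lt (f u) u) ∧
  (∀ u ∈ Mon M, ∀ (w : Fin n →₀ ℕ) (ℓ ℓ' : ℤ),
    DistRel c u (f u) ℓ → DistRel c (u + w) (f (u + w)) ℓ' → |ℓ'| ≤ |ℓ|) ∧
  (∀ u ∈ Mon M, ∀ u' ∈ Mon M, ∀ (w : Fin n →₀ ℕ) (ℓ ℓ' : ℤ),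
    f u' = f u + w → DistRel c u (f u) ℓ → DistRel c u' (f u') ℓ' → |ℓ'| ≤ |ℓ|)

/-- The exponent vector of the monomial `x^p y^q` in `K[x,y]`. -/
noncomputable def ev (p q : ℕ) : Fin 2 →₀ ℕ :=
  Finsupp.single 0 p + Finsupp.single 1 q

/-- The lexicographic term order on monomials of `K[x,y]` with `x ≺ y`. -/
def LexO : (Fin 2 →₀ ℕ) → (Fin 2 →₀ ℕ) → Prop :=
  fun u v => u 1 < v 1 ∨ (u 1 = v 1 ∧ u 0 < v 0)

/-!
For the grading by `ℤ²/ℤ(1,−1)` and `x ≺ y`, a degree-preserving map with `m ⪰ f(m)` can only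
trade powers of `y` for powers of `x`: it sends `x^a y^b` to `x^(a+k) y^(b-k)` with `k ≤ b`, and
`k = d(m, f(m))`. Condition (2) says that this shift `k` does not grow along multiples.

In (a) the shift is `4` at `y⁴`, `1` at `x³y²` and `0` elsewhere. Both moved monomials are minimal
in `M`, which gives (2), and `f(m)` divides `x⁴y` only for `m ∈ {y⁴, x³y²}`, which gives (3).

In (b) the colon ideals are again monomial ideals. An arrow map `g` must fix `x²y` (the only
monomial of `(Q : N)` of degree 3 that is `⪯ x²y`), so by injectivity `g(y³) = xy²`, with
shift `1`. By (2), `g(x²y²) = x²y²`, `g(y⁴) = xy³` and `g(xy³) ∈ {xy³, x²y²}`, contradicting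
injectivity.
-/

section MonomialIdeal

variable {σ K : Type*}

variable (K) in
noncomputable def monomialIdeal [CommSemiring K] (S : Set (σ →₀ ℕ)) :
    Ideal (MvPolynomial σ K) :=
  Ideal.span ((fun s => monomial s (1 : K)) '' S)

lemma mem_monomialIdeal [CommSemiring K] {S : Set (σ →₀ ℕ)} {p : MvPolynomial σ K} :
    p ∈ monomialIdeal K S ↔ ∀ u ∈ p.support, ∃ s ∈ S, s ≤ u :=
  mem_ideal_span_monomial_image

lemma insert_monomial_image [CommSemiring K] (a : σ →₀ ℕ) (S : Set (σ →₀ ℕ)) :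
    insert (monomial a (1 : K)) ((fun s => monomial s 1) '' S) =
      (fun s => monomial s 1) '' insert a S :=
  (Set.image_insert_eq (f := fun s => monomial s (1 : K))).symm

lemma support_mul_monomial_one [CommSemiring K] (p : MvPolynomial σ K) (b : σ →₀ ℕ) :
    (p * monomial b 1).support = p.support.map (addRightEmbedding b) :=
  AddMonoidAlgebra.support_coeff_mul_single p _ (by simp) b

lemma mul_monomial_mem_monomialIdeal_iff [CommSemiring K] {A : Set (σ →₀ ℕ)}
    {p : MvPolynomial σ K} {b : σ →₀ ℕ} :
    p * monomial b 1 ∈ monomialIdeal K A ↔ ∀ u ∈ p.support, ∃ a ∈ A, a ≤ u + b := by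
  rw [mem_monomialIdeal, support_mul_monomial_one]
  simp

lemma colon_monomialIdeal [CommSemiring K] {A B C : Set (σ →₀ ℕ)}
    (h : ∀ u, (∃ c ∈ C, c ≤ u) ↔ ∀ b ∈ B, ∃ a ∈ A, a ≤ u + b) :
    (monomialIdeal K A).colon (monomialIdeal K B) = monomialIdeal K C := by
  ext p
  change p ∈ (monomialIdeal K A).colon (Ideal.span ((fun s => monomial s (1 : K)) '' B)) ↔ _
  simp only [Ideal.colon_span, Submodule.mem_colon, Set.forall_mem_image, smul_eq_mul,
    mul_monomial_mem_monomialIdeal_iff]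
  rw [mem_monomialIdeal, forall₂_comm]
  simp only [h]

variable {n : ℕ}

lemma mem_Mon_monomialIdeal [Field K] {S : Set (Fin n →₀ ℕ)} {u : Fin n →₀ ℕ} :
    u ∈ Mon (monomialIdeal K S) ↔ ∃ s ∈ S, s ≤ u := by
  simp [Mon, mem_monomialIdeal]

lemma add_mem_Mon [Field K] {M : Ideal (MvPolynomial (Fin n) K)} {u : Fin n →₀ ℕ}
    (hu : u ∈ Mon M) (w : Fin n →₀ ℕ) : u + w ∈ Mon M := by
  rw [Mon, Set.mem_ofPred_eq, add_comm, ← mul_one (1 : K), ← monomial_mul]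
  exact M.mul_mem_left _ hu

end MonomialIdeal

section Coordinates

variable {K : Type*} [Field K]

@[simp] lemma ev_apply_zero (a b : ℕ) : ev a b 0 = a := by simp [ev]

@[simp] lemma ev_apply_one (a b : ℕ) : ev a b 1 = b := by simp [ev]

lemma ev_apply_zero_one (u : Fin 2 →₀ ℕ) : ev (u 0) (u 1) = u := by
  ext i
  fin_cases i <;> simp

lemma exists_ev_eq (u : Fin 2 →₀ ℕ) : ∃ a b, ev a b = u := ⟨_, _, ev_apply_zero_one u⟩

@[simp] lemma ev_le_ev {a b p q : ℕ} : ev a b ≤ ev p q ↔ a ≤ p ∧ b ≤ q := by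
  simp [Finsupp.le_def, Fin.forall_fin_two]

@[simp] lemma ev_inj {a b p q : ℕ} : ev a b = ev p q ↔ a = p ∧ b = q := by
  simp [le_antisymm_iff, and_and_and_comm]

@[simp] lemma ev_add_ev (a b p q : ℕ) : ev a b + ev p q = ev (a + p) (b + q) := by
  rw [← ev_apply_zero_one (ev a b + ev p q)]
  simp

lemma distRel_ev_iff {a b p q : ℕ} {ℓ : ℤ} :
    DistRel ![1, -1] (ev a b) (ev p q) ℓ ↔ (a : ℤ) - p = ℓ ∧ (b : ℤ) - q = -ℓ := by
  simp [DistRel, Fin.forall_fin_two]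

lemma lexO_ev {a b p q : ℕ} : LexO (ev a b) (ev p q) ↔ b < q ∨ (b = q ∧ a < p) := by
  simp [LexO]

lemma ev_mem_Mon_insert {S : Set (Fin 2 →₀ ℕ)} {a b p q : ℕ} :
    ev a b ∈ Mon (monomialIdeal K (insert (ev p q) S)) ↔
      p ≤ a ∧ q ≤ b ∨ ev a b ∈ Mon (monomialIdeal K S) := by
  simp only [mem_Mon_monomialIdeal, Set.exists_mem_insert, ev_le_ev]

lemma ev_mem_Mon_singleton {a b p q : ℕ} :
    ev a b ∈ Mon (monomialIdeal K {ev p q}) ↔ p ≤ a ∧ q ≤ b := by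
  simp [mem_Mon_monomialIdeal]

end Coordinates

section ArrowMap

variable {K : Type*} [Field K] {M N : Ideal (MvPolynomial (Fin 2) K)}
  {f : (Fin 2 →₀ ℕ) → (Fin 2 →₀ ℕ)}

lemma distRel_ev_shift {a b k : ℕ} (hk : k ≤ b) {ℓ : ℤ} :
    DistRel ![1, -1] (ev a b) (ev (a + k) (b - k)) ℓ ↔ ℓ = -k := by
  rw [distRel_ev_iff]
  omega

lemma IsArrowMap.exists_shift_of_mem (hf : IsArrowMap ![1, -1] LexO M N f) {a b : ℕ}
    (hab : ev a b ∈ Mon M) : ∃ k ≤ b, f (ev a b) = ev (a + k) (b - k) := by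
  obtain ⟨p, q, hpq⟩ := exists_ev_eq (f (ev a b))
  obtain ⟨ℓ, hℓ⟩ := hf.2.1 _ hab
  have hlex := hf.2.2.1 _ hab
  rw [← hpq, distRel_ev_iff] at hℓ
  rw [← hpq, ev_inj, lexO_ev] at hlex
  exact ⟨b - q, by omega, by rw [← hpq, ev_inj]; omega⟩

lemma IsArrowMap.exists_shift (hf : IsArrowMap ![1, -1] LexO M N f) :
    ∃ κ : ℕ → ℕ → ℕ,
      (∀ a b, ev a b ∈ Mon M → κ a b ≤ b ∧ f (ev a b) = ev (a + κ a b) (b - κ a b)) ∧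
      ∀ a b a' b', ev a b ∈ Mon M → a ≤ a' → b ≤ b' → κ a' b' ≤ κ a b := by
  choose! κ hκ using fun a b (hab : ev a b ∈ Mon M) => hf.exists_shift_of_mem hab
  refine ⟨κ, hκ, fun a b a' b' hab ha hb => ?_⟩
  have hsum : ev a b + ev (a' - a) (b' - b) = ev a' b' := by
    rw [ev_add_ev, ev_inj]
    omega
  have hab' : ev a' b' ∈ Mon M := hsum ▸ add_mem_Mon hab _
  have h := hf.2.2.2.1 _ hab (ev (a' - a) (b' - b)) _ _
    ((hκ a b hab).2 ▸ (distRel_ev_shift (hκ a b hab).1).2 rfl)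
    (hsum ▸ (hκ a' b' hab').2 ▸ (distRel_ev_shift (hκ a' b' hab').1).2 rfl)
  simpa using h

lemma isArrowMap_of_shift (κ : ℕ → ℕ → ℕ) (hbij : Set.BijOn f (Mon M) (Mon N))
    (hf : ∀ a b, ev a b ∈ Mon M → κ a b ≤ b ∧ f (ev a b) = ev (a + κ a b) (b - κ a b))
    (hmul : ∀ a b a' b', ev a b ∈ Mon M → a ≤ a' → b ≤ b' → κ a' b' ≤ κ a b)
    (hdiv : ∀ a b a' b', ev a b ∈ Mon M → ev a' b' ∈ Mon M →
      f (ev a b) ≤ f (ev a' b') → κ a' b' ≤ κ a b) :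
    IsArrowMap ![1, -1] LexO M N f := by
  have hdist : ∀ a b (hab : ev a b ∈ Mon M) ℓ, DistRel ![1, -1] (ev a b) (f (ev a b)) ℓ →
      ℓ = -κ a b := fun a b hab ℓ h =>
    (distRel_ev_shift (hf a b hab).1).1 ((hf a b hab).2 ▸ h)
  refine ⟨hbij, fun u hu => ?_, fun u hu => ?_, fun u hu w ℓ ℓ' hℓ hℓ' => ?_,
    fun u hu u' hu' w ℓ ℓ' hw hℓ hℓ' => ?_⟩
  · obtain ⟨a, b, rfl⟩ := exists_ev_eq u
    exact ⟨_, (hf a b hu).2 ▸ (distRel_ev_shift (hf a b hu).1).2 rfl⟩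
  · obtain ⟨a, b, rfl⟩ := exists_ev_eq u
    have hk := (hf a b hu).1
    rw [(hf a b hu).2, ev_inj, lexO_ev]
    omega
  · obtain ⟨a, b, rfl⟩ := exists_ev_eq u
    obtain ⟨i, j, rfl⟩ := exists_ev_eq w
    have hu' := add_mem_Mon hu (ev i j)
    rw [ev_add_ev] at hu' hℓ'
    rw [hdist a b hu ℓ hℓ, hdist _ _ hu' ℓ' hℓ']
    simpa using hmul a b (a + i) (b + j) hu le_self_add le_self_add
  · obtain ⟨a, b, rfl⟩ := exists_ev_eq u
    obtain ⟨a', b', rfl⟩ := exists_ev_eq u'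
    rw [hdist a b hu ℓ hℓ, hdist a' b' hu' ℓ' hℓ']
    simpa using hdiv a b a' b' hu hu' (hw ▸ le_self_add)

end ArrowMap

section Example

variable {K : Type*} [Field K]

lemma colon_M_eq :
    (monomialIdeal K {ev 5 0, ev 0 5}).colon (monomialIdeal K {ev 5 0, ev 3 2, ev 0 4}) =
      monomialIdeal K {ev 5 0, ev 2 1, ev 0 3} := by
  refine colon_monomialIdeal fun u => ?_
  obtain ⟨a, b, rfl⟩ := exists_ev_eq u
  simp only [Set.exists_mem_insert, Set.forall_mem_insert, Set.mem_singleton_iff, exists_eq_left,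
    forall_eq, ev_add_ev, ev_le_ev]
  omega

lemma colon_N_eq :
    (monomialIdeal K {ev 5 0, ev 0 5}).colon (monomialIdeal K {ev 4 0, ev 3 3, ev 1 4, ev 0 5}) =
      monomialIdeal K {ev 4 0, ev 2 1, ev 1 2, ev 0 5} := by
  refine colon_monomialIdeal fun u => ?_
  obtain ⟨a, b, rfl⟩ := exists_ev_eq u
  simp only [Set.exists_mem_insert, Set.forall_mem_insert, Set.mem_singleton_iff, exists_eq_left,
    forall_eq, ev_add_ev, ev_le_ev]
  omega

def shiftMN (a b : ℕ) : ℕ :=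
  if a = 0 ∧ b = 4 then 4 else if a = 3 ∧ b = 2 then 1 else 0

section MapMN

variable {f : (Fin 2 →₀ ℕ) → (Fin 2 →₀ ℕ)}
  (hf1 : f (ev 0 4) = ev 4 0) (hf2 : f (ev 3 2) = ev 4 1)
  (hf3 : ∀ u, u ≠ ev 0 4 → u ≠ ev 3 2 → f u = u)
include hf1 hf2 hf3

lemma apply_ev_eq_shiftMN (a b : ℕ) : f (ev a b) = ev (a + shiftMN a b) (b - shiftMN a b) := by
  unfold shiftMN
  split_ifs with h1 h2
  · obtain ⟨rfl, rfl⟩ := h1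
    exact hf1
  · obtain ⟨rfl, rfl⟩ := h2
    exact hf2
  · simpa using hf3 (ev a b) (by simpa using h1) (by simpa using h2)

lemma bijOn_Mon_M_N :
    Set.BijOn f (Mon (monomialIdeal K {ev 5 0, ev 3 2, ev 0 4}))
      (Mon (monomialIdeal K {ev 4 0, ev 3 3, ev 1 4, ev 0 5})) := by
  have hf := apply_ev_eq_shiftMN hf1 hf2 hf3
  refine ⟨fun u hu => ?_, fun u hu v hv huv => ?_, fun v hv => ?_⟩
  · obtain ⟨a, b, rfl⟩ := exists_ev_eq u
    rw [hf]
    unfold shiftMN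
    split_ifs <;> simp only [ev_mem_Mon_insert, ev_mem_Mon_singleton] at hu ⊢ <;> omega
  · obtain ⟨a, b, rfl⟩ := exists_ev_eq u
    obtain ⟨a', b', rfl⟩ := exists_ev_eq v
    rw [hf, hf] at huv
    unfold shiftMN at huv
    split_ifs at huv <;>
      simp only [ev_mem_Mon_insert, ev_mem_Mon_singleton, ev_inj] at hu hv huv ⊢ <;> omega
  · obtain ⟨p, q, rfl⟩ := exists_ev_eq v
    by_cases h40 : p = 4 ∧ q = 0
    · obtain ⟨rfl, rfl⟩ := h40
      exact ⟨ev 0 4, by simp [ev_mem_Mon_insert, ev_mem_Mon_singleton], hf1⟩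
    by_cases h41 : p = 4 ∧ q = 1
    · obtain ⟨rfl, rfl⟩ := h41
      exact ⟨ev 3 2, by simp [ev_mem_Mon_insert, ev_mem_Mon_singleton], hf2⟩
    simp only [ev_mem_Mon_insert, ev_mem_Mon_singleton] at hv
    refine ⟨ev p q, ?_, hf3 _ ?_ ?_⟩
    · simp only [ev_mem_Mon_insert, ev_mem_Mon_singleton]
      omega
    all_goals rw [Ne, ev_inj]; omega

lemma isArrowMap_M_N :
    IsArrowMap ![1, -1] LexO (monomialIdeal K {ev 5 0, ev 3 2, ev 0 4})
      (monomialIdeal K {ev 4 0, ev 3 3, ev 1 4, ev 0 5}) f := by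
  have hf := apply_ev_eq_shiftMN hf1 hf2 hf3
  refine isArrowMap_of_shift shiftMN (bijOn_Mon_M_N hf1 hf2 hf3)
    (fun a b hab => ⟨?_, hf a b⟩) (fun a b a' b' hab ha hb => ?_)
    (fun a b a' b' hab hab' hle => ?_)
  · unfold shiftMN
    split_ifs <;> simp only [ev_mem_Mon_insert, ev_mem_Mon_singleton] at hab <;> omega
  · unfold shiftMN
    split_ifs <;> simp only [ev_mem_Mon_insert, ev_mem_Mon_singleton] at hab <;> omega
  · rw [hf, hf] at hle
    unfold shiftMN at hle ⊢
    split_ifs at hle ⊢ <;>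
      simp only [ev_mem_Mon_insert, ev_mem_Mon_singleton, ev_le_ev] at hab hab' hle <;> omega

end MapMN

lemma not_isArrowMap_colon {g : (Fin 2 →₀ ℕ) → (Fin 2 →₀ ℕ)} :
    ¬ IsArrowMap ![1, -1] LexO (monomialIdeal K {ev 5 0, ev 2 1, ev 0 3})
      (monomialIdeal K {ev 4 0, ev 2 1, ev 1 2, ev 0 5}) g := by
  intro hg
  obtain ⟨κ, hκ, hanti⟩ := hg.exists_shift
  have hmaps (a b : ℕ) (hab : ev a b ∈ Mon (monomialIdeal K {ev 5 0, ev 2 1, ev 0 3})) :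
      ev (a + κ a b) (b - κ a b) ∈ Mon (monomialIdeal K {ev 4 0, ev 2 1, ev 1 2, ev 0 5}) :=
    (hκ a b hab).2 ▸ hg.1.mapsTo hab
  have hinj (a b a' b' : ℕ) (hab : ev a b ∈ Mon (monomialIdeal K {ev 5 0, ev 2 1, ev 0 3}))
      (hab' : ev a' b' ∈ Mon (monomialIdeal K {ev 5 0, ev 2 1, ev 0 3}))
      (h : ev (a + κ a b) (b - κ a b) = ev (a' + κ a' b') (b' - κ a' b')) : ev a b = ev a' b' :=
    hg.1.injOn hab hab' (by rw [(hκ a b hab).2, (hκ a' b' hab').2, h])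
  simp only [ev_mem_Mon_insert, ev_mem_Mon_singleton, ev_inj] at hκ hanti hmaps hinj
  have g21 : κ 2 1 = 0 := by
    have := hmaps 2 1 (by omega)
    have := (hκ 2 1 (by omega)).1
    omega
  have g03 : κ 0 3 = 1 := by
    have := hmaps 0 3 (by omega)
    have := (hκ 0 3 (by omega)).1
    have := mt (hinj 0 3 2 1 (by omega) (by omega))
    omega
  have g22 : κ 2 2 = 0 := by
    have := hanti 2 1 2 2 (by omega) le_rfl (by omega)
    omega
  have g04 : κ 0 4 = 1 := by
    have := hanti 0 3 0 4 (by omega) le_rfl (by omega)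
    have := hmaps 0 4 (by omega)
    omega
  have g13 : κ 1 3 ≤ 1 := g03 ▸ hanti 0 3 1 3 (by omega) (by omega) le_rfl
  have := mt (hinj 1 3 0 4 (by omega) (by omega))
  have := mt (hinj 1 3 2 2 (by omega) (by omega))
  omega

end Example

/-- (Example 3.9.)  For the grading of `K[x,y]` by `ℤ²/ℤ(1,−1)` and
the lexicographic order with `x ≺ y`: (a) for `M = ⟨x⁵, x³y², y⁴⟩` and
`N = ⟨x⁴, x³y³, xy⁴, y⁵⟩`, the map sending `y⁴ ↦ x⁴`, `x³y² ↦ x⁴y` and fixing all other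
monomials is an arrow map `Mon M → Mon N`; (b) with `Q = ⟨x⁵, y⁵⟩`, the colon ideals
are `(Q : M) = ⟨x⁵, x²y, y³⟩` and `(Q : N) = ⟨x⁴, x²y, xy², y⁵⟩`, and there is **no**
arrow map `Mon (Q : M) → Mon (Q : N)`. -/
theorem example_arrow_map_but_no_dual_arrow_map {K : Type*} [Field K]
    (c : Fin 2 → ℤ) (hc : c = ![1, -1])
    (M N Q : Ideal (MvPolynomial (Fin 2) K))
    (hM : M = Ideal.span {monomial (ev 5 0) 1, monomial (ev 3 2) 1, monomial (ev 0 4) 1})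
    (hN : N = Ideal.span {monomial (ev 4 0) 1, monomial (ev 3 3) 1,
      monomial (ev 1 4) 1, monomial (ev 0 5) 1})
    (hQ : Q = Ideal.span {monomial (ev 5 0) 1, monomial (ev 0 5) 1})
    (f : (Fin 2 →₀ ℕ) → (Fin 2 →₀ ℕ))
    (hf1 : f (ev 0 4) = ev 4 0) (hf2 : f (ev 3 2) = ev 4 1)
    (hf3 : ∀ u, u ≠ ev 0 4 → u ≠ ev 3 2 → f u = u) :
    IsArrowMap c LexO M N f ∧
    Q.colon M = Ideal.span {monomial (ev 5 0) 1, monomial (ev 2 1) 1,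
      monomial (ev 0 3) 1} ∧
    Q.colon N = Ideal.span {monomial (ev 4 0) 1, monomial (ev 2 1) 1,
      monomial (ev 1 2) 1, monomial (ev 0 5) 1} ∧
    ¬ ∃ g : (Fin 2 →₀ ℕ) → (Fin 2 →₀ ℕ), IsArrowMap c LexO (Q.colon M) (Q.colon N) g := by
  simp only [← Set.image_singleton (f := fun s => monomial s (1 : K)), insert_monomial_image,
    ← monomialIdeal.eq_1] at hM hN hQ ⊢
  subst hc hM hN hQ
  rw [colon_M_eq, colon_N_eq]
  exact ⟨isArrowMap_M_N hf1 hf2 hf3, rfl, rfl, fun ⟨_, hg⟩ => not_isArrowMap_colon hg⟩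
end
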